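/- arXiv:0906.4815 — 6 statements merged into one kernel-verified Lean document; each statement's English description precedes it below -/
import Mathlib

section
/- There exist constants c, C > 0 such that for all z ∈ ℂ, c · e^{φ(z)} · dist(z,Λ)/|z|^{3/2} ≤ |E(z)| ≤ C · e^{φ(z)} · dist(z,Λ)/|z|^{3/2} for |z| large, where Λ = {λ_n} and dist(z,Λ) = inf_n |z - λ_n|. -/
open Complex

/-!
Only the moduli `‖λ n‖ = e^{(n+1)/2}` matter. Write `‖z‖ = e^L` and let `m` be the index with
`(m+1)/2` within `1/4` of `L`. For `n ≠ m` the exponent `g n = L - (n+1)/2` of `‖z/λ n‖` stays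
`1/4` away from `0`, so `log ‖1 - z/λ n‖ = max (g n) 0 + O(e^{-|g n|})`; the errors are summable
uniformly in `z` because the `g n` form an arithmetic progression of step `1/2`, and the main
terms add up to `∑_{n<m} g n = L² - L/2 + O(1)`. The remaining factor is
`‖1 - z/λ m‖ = ‖z - λ m‖/‖λ m‖ ≍ dist(z, Λ)/‖z‖`, because every other `λ n` is at distance
`≫ ‖z‖` from `z`. Hence `log ‖E z‖ = L² - 3L/2 + log dist(z, Λ) + O(1)`.
-/

theorem exp_neg_five_mul_le_one_sub {x : ℝ} (hx0 : 0 ≤ x) (hx : x ≤ 4 / 5) :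
    Real.exp (-(5 * x)) ≤ 1 - x := by
  have h : 1 + 5 * x ≤ Real.exp (5 * x) := by linarith [Real.add_one_le_exp (5 * x)]
  rw [Real.exp_neg, inv_le_iff_one_le_mul₀ (Real.exp_pos _)]
  nlinarith

theorem one_add_exp_eq (g : ℝ) : 1 + Real.exp g = Real.exp (max g 0) * (1 + Real.exp (-|g|)) := by
  rcases le_total 0 g with hg | hg
  · rw [max_eq_left hg, abs_of_nonneg hg, mul_add, ← Real.exp_add]; simp [add_comm]
  · rw [max_eq_right hg, abs_of_nonpos hg, neg_neg]; simp

theorem abs_one_sub_exp_eq (g : ℝ) :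
    |1 - Real.exp g| = Real.exp (max g 0) * (1 - Real.exp (-|g|)) := by
  rcases le_total 0 g with hg | hg
  · rw [max_eq_left hg, abs_of_nonneg hg, abs_of_nonpos (by linarith [Real.one_le_exp hg]),
      mul_sub, ← Real.exp_add]; simp
  · rw [max_eq_right hg, abs_of_nonpos hg, neg_neg,
      abs_of_nonneg (by linarith [Real.exp_le_one_iff.2 hg])]; simp

theorem norm_one_sub_mem_Icc {w : ℂ} {g : ℝ} (hw : ‖w‖ = Real.exp g) (hg : 1 / 4 ≤ |g|) :
    ‖1 - w‖ ∈ Set.Icc (Real.exp (max g 0 - 5 * Real.exp (-|g|)))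
      (Real.exp (max g 0 + 5 * Real.exp (-|g|))) := by
  set x := Real.exp (-|g|)
  have hx0 : 0 ≤ x := (Real.exp_pos _).le
  have hx : x ≤ 4 / 5 := by
    have : 5 / 4 ≤ Real.exp (1 / 4) := by linarith [Real.add_one_le_exp (1 / 4 : ℝ)]
    calc x ≤ Real.exp (-(1 / 4)) := Real.exp_le_exp.2 (by linarith)
      _ = (Real.exp (1 / 4))⁻¹ := Real.exp_neg _
      _ ≤ (5 / 4)⁻¹ := inv_anti₀ (by norm_num) this
      _ = 4 / 5 := by norm_num
  rw [Real.exp_sub, Real.exp_add, div_eq_mul_inv, ← Real.exp_neg]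
  constructor
  · calc Real.exp (max g 0) * Real.exp (-(5 * x)) ≤ Real.exp (max g 0) * (1 - x) := by
          gcongr; exact exp_neg_five_mul_le_one_sub hx0 hx
      _ = |‖(1 : ℂ)‖ - ‖w‖| := by rw [norm_one, hw, abs_one_sub_exp_eq]
      _ ≤ ‖1 - w‖ := abs_norm_sub_norm_le _ _
  · calc ‖1 - w‖ ≤ ‖(1 : ℂ)‖ + ‖w‖ := norm_sub_le _ _
      _ = Real.exp (max g 0) * (1 + x) := by rw [norm_one, hw, one_add_exp_eq]
      _ ≤ Real.exp (max g 0) * Real.exp (5 * x) := by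
          gcongr; linarith [Real.add_one_le_exp (5 * x)]

theorem abs_log_norm_one_sub_sub_max_le {w : ℂ} {g : ℝ} (hw : ‖w‖ = Real.exp g)
    (hg : 1 / 4 ≤ |g|) : |Real.log ‖1 - w‖ - max g 0| ≤ 5 * Real.exp (-|g|) := by
  obtain ⟨hlo, hhi⟩ := norm_one_sub_mem_Icc hw hg
  have hpos : 0 < ‖1 - w‖ := (Real.exp_pos _).trans_le hlo
  rw [abs_sub_le_iff]
  constructor
  · linarith [(Real.log_le_iff_le_exp hpos).2 hhi]
  · linarith [(Real.le_log_iff_exp_le hpos).2 hlo]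

theorem abs_tsum_sub_tsum_le {ι : Type*} {b p e : ι → ℝ} (hp : Summable p) (he : Summable e)
    (h : ∀ i, |b i - p i| ≤ e i) : |∑' i, b i - ∑' i, p i| ≤ ∑' i, e i := by
  have hbp : Summable fun i => b i - p i := he.of_norm_bounded h
  have hb : Summable b := by simpa using hbp.add hp
  rw [← hb.tsum_sub hp]
  exact (norm_tsum_le_tsum_norm hbp.norm).trans (hbp.norm.tsum_le_tsum h he)

theorem norm_tprod_one_add_eq {ι : Type*} [DecidableEq ι] {f : ι → ℂ}
    (hf : Summable fun j => ‖f j‖) (i : ι) (hne : ∀ j ≠ i, 1 + f j ≠ 0) :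
    ‖∏' j, (1 + f j)‖ = ‖1 + f i‖ * Real.exp (∑' j, Real.log ‖1 + Function.update f i 0 j‖) := by
  have hf' : Summable fun j => ‖Function.update f i 0 j‖ :=
    hf.of_nonneg_of_le (fun _ => norm_nonneg _) fun j => by
      rcases eq_or_ne j i with rfl | hj <;> simp [*]
  have hupd : Function.update (fun j => 1 + f j) i 1 = fun j => 1 + Function.update f i 0 j := by
    ext1 j; rcases eq_or_ne j i with rfl | hj <;> simp [*]
  have hite : (fun j => if j = i then 1 else 1 + f j) = fun j => 1 + Function.update f i 0 j := by
    rw [← hupd]; ext1 j; simp [Function.update_apply]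
  have hmul := multipliable_one_add_of_summable hf'
  have hpos : ∀ j, 0 < ‖1 + Function.update f i 0 j‖ := fun j => by
    rcases eq_or_ne j i with rfl | hj
    · simp
    · simpa [hj] using hne j hj
  rw [Multipliable.tprod_eq_mul_tprod_ite' i (hupd ▸ hmul), norm_mul, hite, hmul.norm_tprod,
    Real.rexp_tsum_eq_tprod hpos hf'.summable_log_norm_one_add]

theorem exp_one_div_four_le : Real.exp (1 / 4) ≤ 4 / 3 := by
  have := Real.exp_bound_div_one_sub_of_interval (x := 1 / 4) (by norm_num) (by norm_num)
  norm_num at this ⊢; linarith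

theorem tsum_exp_neg_half_pow_le : ∑' k : ℕ, Real.exp (-(1 / 2)) ^ k ≤ 3 := by
  have hq : Real.exp (-(1 / 2)) ≤ 2 / 3 := by
    have : 3 / 2 ≤ Real.exp (1 / 2) := by linarith [Real.add_one_le_exp (1 / 2 : ℝ)]
    rw [Real.exp_neg]
    calc (Real.exp (1 / 2))⁻¹ ≤ (3 / 2)⁻¹ := inv_anti₀ (by norm_num) this
      _ = 2 / 3 := by norm_num
  rw [tsum_geometric_of_lt_one (Real.exp_pos _).le (by linarith)]
  calc (1 - Real.exp (-(1 / 2)))⁻¹ ≤ (1 / 3)⁻¹ := inv_anti₀ (by norm_num) (by linarith)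
    _ = 3 := by norm_num

theorem summable_exp_neg_half_pow : Summable fun k : ℕ => Real.exp (-(1 / 2)) ^ k :=
  summable_geometric_of_lt_one (Real.exp_pos _).le (Real.exp_lt_one_iff.2 (by norm_num))

theorem exp_neg_abs_sub_div_two_add (m k : ℕ) :
    Real.exp (-|((k + m : ℕ) : ℝ) - m| / 2) = Real.exp (-(1 / 2)) ^ k := by
  rw [← Real.exp_nat_mul]; push_cast
  rw [add_sub_cancel_right, abs_of_nonneg (Nat.cast_nonneg k)]; ring_nf

theorem summable_exp_neg_abs_sub_div_two (m : ℕ) :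
    Summable fun n : ℕ => Real.exp (-|(n : ℝ) - m| / 2) := by
  rw [← summable_nat_add_iff m]
  simpa only [exp_neg_abs_sub_div_two_add] using summable_exp_neg_half_pow

theorem tsum_exp_neg_abs_sub_div_two_le (m : ℕ) :
    ∑' n : ℕ, Real.exp (-|(n : ℝ) - m| / 2) ≤ 6 := by
  rw [← (summable_exp_neg_abs_sub_div_two m).sum_add_tsum_nat_add m]
  simp only [exp_neg_abs_sub_div_two_add]
  have head : ∑ n ∈ Finset.range m, Real.exp (-|(n : ℝ) - m| / 2) ≤ 3 := by
    rw [← Finset.sum_range_reflect]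
    calc ∑ j ∈ Finset.range m, Real.exp (-|((m - 1 - j : ℕ) : ℝ) - m| / 2)
        ≤ ∑ j ∈ Finset.range m, Real.exp (-(1 / 2)) ^ j := by
          refine Finset.sum_le_sum fun j hj => ?_
          rw [← Real.exp_nat_mul, Real.exp_le_exp]
          have hj : j + 1 ≤ m := Finset.mem_range.1 hj
          rw [Nat.cast_sub (by omega), Nat.cast_sub (by omega),
            abs_of_nonpos (by push_cast; linarith)]
          push_cast; linarith
      _ ≤ ∑' j : ℕ, Real.exp (-(1 / 2)) ^ j :=
          summable_exp_neg_half_pow.sum_le_tsum _ fun j _ => by positivity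
      _ ≤ 3 := tsum_exp_neg_half_pow_le
  linarith [tsum_exp_neg_half_pow_le]

theorem exists_abs_two_mul_sub_le {L : ℝ} (hL : 1 / 4 ≤ L) :
    ∃ m : ℕ, |2 * L - (m + 1)| ≤ 1 / 2 := by
  refine ⟨⌊2 * L - 1 / 2⌋₊, abs_le.2 ⟨?_, ?_⟩⟩
  · linarith [Nat.floor_le (show 0 ≤ 2 * L - 1 / 2 by linarith)]
  · linarith [Nat.lt_floor_add_one (2 * L - 1 / 2)]

section NearestIndex

variable {L : ℝ} {m : ℕ}

theorem abs_sub_div_two_sub_le_abs (hm : |2 * L - (m + 1)| ≤ 1 / 2) (n : ℕ) :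
    |(n : ℝ) - m| / 2 - 1 / 4 ≤ |L - (n + 1) / 2| := by
  have h := abs_sub_abs_le_abs_sub ((n : ℝ) - m) (2 * L - (m + 1))
  rw [show (n : ℝ) - m - (2 * L - (m + 1)) = -(2 * (L - (n + 1) / 2)) by ring, abs_neg,
    abs_mul, abs_two] at h
  linarith

theorem one_div_four_le_abs_of_ne (hm : |2 * L - (m + 1)| ≤ 1 / 2) {n : ℕ} (hn : n ≠ m) :
    1 / 4 ≤ |L - (n + 1) / 2| := by
  have h : 1 ≤ |(n : ℝ) - m| := by
    rcases lt_or_gt_of_ne hn with h | h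
    · have : (n : ℝ) + 1 ≤ m := by exact_mod_cast h
      exact le_abs.2 (Or.inr (by linarith))
    · have : (m : ℝ) + 1 ≤ n := by exact_mod_cast h
      exact le_abs.2 (Or.inl (by linarith))
  linarith [abs_sub_div_two_sub_le_abs hm n]

theorem exp_neg_abs_sub_half_le (hm : |2 * L - (m + 1)| ≤ 1 / 2) (n : ℕ) :
    Real.exp (-|L - (n + 1) / 2|) ≤ Real.exp (1 / 4) * Real.exp (-|(n : ℝ) - m| / 2) := by
  rw [← Real.exp_add, Real.exp_le_exp]
  linarith [abs_sub_div_two_sub_le_abs hm n]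

theorem summable_exp_neg_abs_sub_half (hm : |2 * L - (m + 1)| ≤ 1 / 2) :
    Summable fun n : ℕ => Real.exp (-|L - (n + 1) / 2|) :=
  ((summable_exp_neg_abs_sub_div_two m).mul_left (Real.exp (1 / 4))).of_nonneg_of_le
    (fun _ => (Real.exp_pos _).le) (exp_neg_abs_sub_half_le hm)

theorem tsum_exp_neg_abs_sub_half_le (hm : |2 * L - (m + 1)| ≤ 1 / 2) :
    ∑' n : ℕ, Real.exp (-|L - (n + 1) / 2|) ≤ 8 := by
  calc ∑' n : ℕ, Real.exp (-|L - (n + 1) / 2|)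
      ≤ ∑' n : ℕ, Real.exp (1 / 4) * Real.exp (-|(n : ℝ) - m| / 2) :=
        (summable_exp_neg_abs_sub_half hm).tsum_le_tsum (exp_neg_abs_sub_half_le hm)
          ((summable_exp_neg_abs_sub_div_two m).mul_left _)
    _ = Real.exp (1 / 4) * ∑' n : ℕ, Real.exp (-|(n : ℝ) - m| / 2) := tsum_mul_left
    _ ≤ 4 / 3 * 6 := by
        gcongr
        · exact exp_one_div_four_le
        · exact tsum_exp_neg_abs_sub_div_two_le m
    _ = 8 := by norm_num

theorem abs_sum_range_sub_half_sub_le (hm : |2 * L - (m + 1)| ≤ 1 / 2) :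
    |∑ n ∈ Finset.range m, (L - (n + 1) / 2) - (L ^ 2 - L / 2)| ≤ 1 := by
  have hsum : ∀ k : ℕ, ∑ n ∈ Finset.range k, (L - (n + 1) / 2) = k * L - k * (k + 1) / 4 := by
    intro k
    induction k with
    | zero => simp
    | succ k ih => rw [Finset.sum_range_succ, ih]; push_cast; ring
  obtain ⟨h1, h2⟩ := abs_le.1 hm
  rw [hsum, abs_le]
  constructor <;> nlinarith

theorem max_sub_half_eq_ite (hm : |2 * L - (m + 1)| ≤ 1 / 2) {n : ℕ} (hn : n ≠ m) :
    max (L - (n + 1) / 2) 0 = if n < m then L - (n + 1) / 2 else 0 := by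
  obtain ⟨h1, h2⟩ := abs_le.1 hm
  split_ifs with h
  · have : (n : ℝ) + 1 ≤ m := by exact_mod_cast h
    exact max_eq_left (by linarith)
  · have : (m : ℝ) + 1 ≤ n := by exact_mod_cast lt_of_le_of_ne (not_lt.1 h) hn.symm
    exact max_eq_right (by linarith)

variable {lam : ℕ → ℂ} {z : ℂ}

theorem norm_div_eq_exp_sub (hlam : ∀ n : ℕ, ‖lam n‖ = Real.exp ((n + 1) / 2))
    (hz : ‖z‖ = Real.exp L) (n : ℕ) : ‖z / lam n‖ = Real.exp (L - (n + 1) / 2) := by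
  rw [norm_div, hz, hlam, Real.exp_sub]

theorem norm_sub_eq_exp_mul (hlam : ∀ n : ℕ, ‖lam n‖ = Real.exp ((n + 1) / 2)) (n : ℕ) :
    ‖z - lam n‖ = Real.exp ((n + 1) / 2) * ‖1 - z / lam n‖ := by
  have hne : lam n ≠ 0 := norm_pos_iff.1 (hlam n ▸ Real.exp_pos _)
  rw [← hlam, ← norm_mul, mul_one_sub, mul_div_cancel₀ _ hne, norm_sub_rev]

theorem abs_tsum_log_norm_sub_le (hlam : ∀ n : ℕ, ‖lam n‖ = Real.exp ((n + 1) / 2))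
    (hz : ‖z‖ = Real.exp L) (hm : |2 * L - (m + 1)| ≤ 1 / 2) :
    |∑' n, Real.log ‖1 + Function.update (fun n => -(z / lam n)) m 0 n‖ - (L ^ 2 - L / 2)|
      ≤ 41 := by
  set p : ℕ → ℝ := fun n => if n < m then L - (n + 1) / 2 else 0
  have hp : ∑' n, p n = ∑ n ∈ Finset.range m, (L - (n + 1) / 2) := by
    rw [tsum_eq_sum (s := Finset.range m) fun n hn => if_neg (by simpa using hn)]
    exact Finset.sum_congr rfl fun n hn => if_pos (Finset.mem_range.1 hn)
  have hbp : ∀ n, |Real.log ‖1 + Function.update (fun n => -(z / lam n)) m 0 n‖ - p n|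
      ≤ 5 * Real.exp (-|L - (n + 1) / 2|) := by
    intro n
    rcases eq_or_ne n m with rfl | hn
    · simp [p, Real.exp_nonneg]
    · simp only [p]
      rw [Function.update_of_ne hn, ← sub_eq_add_neg, ← max_sub_half_eq_ite hm hn]
      exact abs_log_norm_one_sub_sub_max_le (norm_div_eq_exp_sub hlam hz n)
        (one_div_four_le_abs_of_ne hm hn)
  have hsum := abs_tsum_sub_tsum_le (summable_of_ne_finset_zero (s := Finset.range m)
    fun n hn => if_neg (by simpa using hn)) ((summable_exp_neg_abs_sub_half hm).mul_left 5) hbp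
  rw [tsum_mul_left, hp] at hsum
  have h1 := abs_sum_range_sub_half_sub_le hm
  have h8 := tsum_exp_neg_abs_sub_half_le hm
  calc _ ≤ _ := abs_sub_le _ (∑ n ∈ Finset.range m, (L - (n + 1) / 2)) _
    _ ≤ 41 := by linarith

theorem exp_sub_five_le_norm_sub (hlam : ∀ n : ℕ, ‖lam n‖ = Real.exp ((n + 1) / 2))
    (hz : ‖z‖ = Real.exp L) (hm : |2 * L - (m + 1)| ≤ 1 / 2) {n : ℕ} (hn : n ≠ m) :
    Real.exp (L - 5) ≤ ‖z - lam n‖ := by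
  have hfac := (norm_one_sub_mem_Icc (norm_div_eq_exp_sub hlam hz n)
    (one_div_four_le_abs_of_ne hm hn)).1
  have he : Real.exp (-|L - (n + 1) / 2|) ≤ 1 := Real.exp_le_one_iff.2 (by simp)
  rw [norm_sub_eq_exp_mul hlam]
  calc Real.exp (L - 5) = Real.exp ((n + 1) / 2) * Real.exp (L - (n + 1) / 2 - 5) := by
        rw [← Real.exp_add]; ring_nf
    _ ≤ _ := by
        gcongr
        exact (Real.exp_le_exp.2 (by linarith [le_max_left (L - (n + 1) / 2) 0])).trans hfac

theorem norm_sub_le_exp_add_two (hlam : ∀ n : ℕ, ‖lam n‖ = Real.exp ((n + 1) / 2))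
    (hz : ‖z‖ = Real.exp L) (hm : |2 * L - (m + 1)| ≤ 1 / 2) :
    ‖z - lam m‖ ≤ Real.exp (L + 2) := by
  have hρ : Real.exp ((m + 1) / 2) ≤ Real.exp L * Real.exp (1 / 4) := by
    rw [← Real.exp_add, Real.exp_le_exp]; linarith [(abs_le.1 hm).1]
  have h3 : 3 ≤ Real.exp 2 := by linarith [Real.add_one_le_exp 2]
  calc ‖z - lam m‖ ≤ ‖z‖ + ‖lam m‖ := norm_sub_le _ _
    _ ≤ Real.exp L * 3 := by
        rw [hz, hlam]; nlinarith [exp_one_div_four_le, Real.exp_pos L]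
    _ ≤ Real.exp (L + 2) := by rw [Real.exp_add]; gcongr

theorem norm_one_sub_div_mem_Icc (hlam : ∀ n : ℕ, ‖lam n‖ = Real.exp ((n + 1) / 2))
    (hz : ‖z‖ = Real.exp L) (hm : |2 * L - (m + 1)| ≤ 1 / 2) :
    ‖1 - z / lam m‖ ∈ Set.Icc (Real.exp (-L - 1 / 4) * ⨅ n, ‖z - lam n‖)
      (Real.exp (29 / 4 - L) * ⨅ n, ‖z - lam n‖) := by
  have hbdd : BddBelow (Set.range fun n => ‖z - lam n‖) :=
    ⟨0, by rintro _ ⟨n, rfl⟩; exact norm_nonneg _⟩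
  have hinf_nonneg : 0 ≤ ⨅ n, ‖z - lam n‖ := Real.iInf_nonneg fun n => norm_nonneg _
  have hinf_le : ⨅ n, ‖z - lam n‖ ≤ ‖z - lam m‖ := ciInf_le hbdd m
  have hle_inf : Real.exp (-7) * ‖z - lam m‖ ≤ ⨅ n, ‖z - lam n‖ := by
    refine le_ciInf fun n => ?_
    rcases eq_or_ne n m with rfl | hn
    · exact mul_le_of_le_one_left (norm_nonneg _) (Real.exp_le_one_iff.2 (by norm_num))
    · calc Real.exp (-7) * ‖z - lam m‖ ≤ Real.exp (-7) * Real.exp (L + 2) := by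
            gcongr; exact norm_sub_le_exp_add_two hlam hz hm
        _ = Real.exp (L - 5) := by rw [← Real.exp_add]; ring_nf
        _ ≤ ‖z - lam n‖ := exp_sub_five_le_norm_sub hlam hz hm hn
  have hfac : ‖1 - z / lam m‖ = Real.exp (-((m + 1) / 2)) * ‖z - lam m‖ := by
    rw [norm_sub_eq_exp_mul hlam, ← mul_assoc, ← Real.exp_add, neg_add_cancel, Real.exp_zero,
      one_mul]
  obtain ⟨h1, h2⟩ := abs_le.1 hm
  rw [hfac]
  constructor
  · gcongr; linarith
  · calc Real.exp (-((m + 1) / 2)) * ‖z - lam m‖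
        = Real.exp (-((m + 1) / 2) + 7) * (Real.exp (-7) * ‖z - lam m‖) := by
          rw [← mul_assoc, ← Real.exp_add]; ring_nf
      _ ≤ _ := by gcongr; linarith

theorem norm_tprod_one_sub_div_mem_Icc (hlam : ∀ n : ℕ, ‖lam n‖ = Real.exp ((n + 1) / 2))
    (hz : ‖z‖ = Real.exp L) (hL : 1 / 4 ≤ L) :
    ‖∏' n, (1 - z / lam n)‖ ∈ Set.Icc (Real.exp (L ^ 2 - 3 / 2 * L - 42) * ⨅ n, ‖z - lam n‖)
      (Real.exp (L ^ 2 - 3 / 2 * L + 49) * ⨅ n, ‖z - lam n‖) := by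
  obtain ⟨m, hm⟩ := exists_abs_two_mul_sub_le hL
  have hsummable : Summable fun n => ‖-(z / lam n)‖ := by
    refine (summable_exp_neg_half_pow.mul_left (Real.exp (L - 1 / 2))).congr fun n => ?_
    rw [norm_neg, norm_div_eq_exp_sub hlam hz, ← Real.exp_nat_mul, ← Real.exp_add]
    ring_nf
  have hne : ∀ n ≠ m, 1 + -(z / lam n) ≠ 0 := fun n hn h => by
    have := (norm_one_sub_mem_Icc (norm_div_eq_exp_sub hlam hz n)
      (one_div_four_le_abs_of_ne hm hn)).1
    rw [← sub_eq_add_neg] at h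
    rw [h, norm_zero] at this
    exact (Real.exp_pos _).not_ge this
  have hsplit := norm_tprod_one_add_eq hsummable m hne
  simp only [← sub_eq_add_neg] at hsplit
  obtain ⟨hT₁, hT₂⟩ := abs_le.1 (abs_tsum_log_norm_sub_le hlam hz hm)
  obtain ⟨hf₁, hf₂⟩ := norm_one_sub_div_mem_Icc hlam hz hm
  set d := ⨅ n, ‖z - lam n‖
  set T := ∑' n, Real.log ‖1 + Function.update (fun n => -(z / lam n)) m 0 n‖
  have hd : 0 ≤ d := Real.iInf_nonneg fun n => norm_nonneg _
  rw [hsplit]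
  constructor
  · calc Real.exp (L ^ 2 - 3 / 2 * L - 42) * d ≤ Real.exp (-L - 1 / 4 + T) * d :=
          mul_le_mul_of_nonneg_right (Real.exp_le_exp.2 (by linarith)) hd
      _ = Real.exp (-L - 1 / 4) * d * Real.exp T := by rw [Real.exp_add]; ring
      _ ≤ ‖1 - z / lam m‖ * Real.exp T := by gcongr
  · calc ‖1 - z / lam m‖ * Real.exp T ≤ Real.exp (29 / 4 - L) * d * Real.exp T := by gcongr
      _ = Real.exp (29 / 4 - L + T) * d := by rw [Real.exp_add]; ring
      _ ≤ Real.exp (L ^ 2 - 3 / 2 * L + 49) * d :=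
          mul_le_mul_of_nonneg_right (Real.exp_le_exp.2 (by linarith)) hd

end NearestIndex

/-- `|E(z)| ≍ e^{φ(z)} dist(z,Λ)/|z|^{3/2}` for large `|z|`, where
`φ(z) = (log⁺|z|)²`, `λ_n = exp((n+1)/2 + iθ_n)` and `E(z) = ∏ (1 - z/λ_n)`. -/
theorem product_modulus_estimate (θ : ℕ → ℝ)
    (lam : ℕ → ℂ) (hlam : ∀ n, lam n = Complex.exp (((n + 1 : ℝ) / 2 : ℂ) + (θ n : ℂ) * Complex.I))
    (φ : ℂ → ℝ) (hφ : ∀ z, φ z = (max (Real.log (‖z‖)) 0) ^ 2)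
    (E : ℂ → ℂ) (hE : ∀ z, E z = ∏' n : ℕ, (1 - z / lam n))
    (d : ℂ → ℝ) (hd : ∀ z, d z = ⨅ n : ℕ, ‖z - lam n‖) :
    ∃ c C R : ℝ, 0 < c ∧ 0 < C ∧ 0 < R ∧ ∀ z : ℂ, R ≤ ‖z‖ →
      c * Real.exp (φ z) * d z / (‖z‖) ^ ((3 : ℝ) / 2) ≤ ‖E z‖ ∧
      ‖E z‖ ≤ C * Real.exp (φ z) * d z / (‖z‖) ^ ((3 : ℝ) / 2) := by
  refine ⟨Real.exp (-42), Real.exp 49, Real.exp 1, Real.exp_pos _, Real.exp_pos _,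
    Real.exp_pos _, fun z hz => ?_⟩
  obtain ⟨L, hzL⟩ : ∃ L, ‖z‖ = Real.exp L :=
    ⟨_, (Real.exp_log ((Real.exp_pos 1).trans_le hz)).symm⟩
  have hL : 1 ≤ L := Real.exp_le_exp.1 (hzL ▸ hz)
  have hnorm : ∀ n : ℕ, ‖lam n‖ = Real.exp ((n + 1) / 2) := fun n => by
    rw [hlam, Complex.norm_exp]; simp
  have hrhs : ∀ c : ℝ, Real.exp c * Real.exp (φ z) * d z / ‖z‖ ^ ((3 : ℝ) / 2)
      = Real.exp (L ^ 2 - 3 / 2 * L + c) * ⨅ n, ‖z - lam n‖ := fun c => by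
    rw [hφ, hd, hzL, Real.log_exp, max_eq_left (by linarith), ← Real.exp_mul, div_eq_mul_inv,
      ← Real.exp_neg, mul_right_comm, ← Real.exp_add, ← Real.exp_add]
    ring_nf
  obtain ⟨hlo, hhi⟩ := norm_tprod_one_sub_div_mem_Icc hnorm hzL (by linarith)
  rw [hrhs, hrhs, hE]
  exact ⟨hlo, hhi⟩
end

section
/- There exist constants c, C > 0 such that c |λ_n|^{-3/2} e^{φ(λ_n)} ≤ |E'(λ_n)| ≤ C |λ_n|^{-3/2} e^{φ(λ_n)} for all n ≥ 0. -/
/-!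
At a zero `λ_n` the product factors as `E z = (1 - z / λ_n) G z` with `G` the product over `k ≠ n`,
which is continuous, so `E'(λ_n) = -G(λ_n) / λ_n`. A factor `1 - λ_n / λ_k` with `k > n` lies within
`1 ± e^{-(k-n)/2}` in modulus; for `k < n` one first pulls out `λ_n / λ_k`, of modulus
`e^{(n-k)/2}`, and these contribute `e^{n(n+1)/4}` in total. Hence `|E'(λ_n)|` equals
`|λ_n|⁻¹ e^{n(n+1)/4} = |λ_n|^{-3/2} e^{φ(λ_n)}` up to a factor between `∏ (1 - e^{-(j+1)/2})²` and
`∏ (1 + e^{-(j+1)/2})²`.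
-/

open Function Finset

theorem hasDerivAt_sub_smul {𝕜 F : Type*} [NontriviallyNormedField 𝕜] [NormedAddCommGroup F]
    [NormedSpace 𝕜 F] {g : 𝕜 → F} {a : 𝕜} (hg : ContinuousAt g a) :
    HasDerivAt (fun z => (z - a) • g z) (g a) a := by
  rw [hasDerivAt_iff_tendsto_slope]
  refine (hg.tendsto.mono_left nhdsWithin_le_nhds).congr' ?_
  filter_upwards [self_mem_nhdsWithin] with z hz
  rw [slope_def_module, sub_self, zero_smul, sub_zero, smul_smul,
    inv_mul_cancel₀ (sub_ne_zero.2 hz), one_smul]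

section CanonicalProduct

variable {ι : Type*} {b : ι → ℂ}

theorem multipliable_one_sub_mul (hb : Summable fun k => ‖b k‖) (z : ℂ) :
    Multipliable fun k => 1 - z * b k := by
  simpa [sub_eq_add_neg] using
    multipliable_one_add_of_summable (f := fun k => -(z * b k)) (by simpa using hb.mul_left ‖z‖)

theorem continuous_tprod_one_sub_mul (hb : Summable fun k => ‖b k‖) :
    Continuous fun z : ℂ => ∏' k, (1 - z * b k) := by
  rw [continuous_iff_continuousAt]
  intro z₀
  have hbound : ∀ k, ∀ z ∈ Metric.ball z₀ 1, ‖-(z * b k)‖ ≤ (‖z₀‖ + 1) * ‖b k‖ := by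
    intro k z hz
    rw [norm_neg, norm_mul]
    gcongr
    linarith [norm_le_norm_add_norm_sub' z z₀, (mem_ball_iff_norm.1 hz).le]
  have hprod := Summable.hasProdLocallyUniformlyOn_one_add Metric.isOpen_ball
    (hb.mul_left (‖z₀‖ + 1)) (.of_forall hbound) (fun k => by fun_prop)
  have hcont := (hasProdLocallyUniformlyOn_iff_tendstoLocallyUniformlyOn.1 hprod).continuousOn
    (.of_forall fun s => by fun_prop)
  simp only [← sub_eq_add_neg] at hcont
  exact hcont.continuousAt (Metric.isOpen_ball.mem_nhds (Metric.mem_ball_self one_pos))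

theorem summable_norm_update_zero [DecidableEq ι] (hb : Summable fun k => ‖b k‖) (n : ι) :
    Summable fun k => ‖update b n 0 k‖ :=
  hb.of_nonneg_of_le (fun _ => norm_nonneg _) fun k => by
    rcases eq_or_ne k n with rfl | hk <;> simp [*]

theorem tprod_one_sub_mul_eq_mul_tprod_update [DecidableEq ι] (hb : Summable fun k => ‖b k‖)
    (z : ℂ) (n : ι) :
    ∏' k, (1 - z * b k) = (1 - z * b n) * ∏' k, (1 - z * update b n 0 k) := by
  have hmul := multipliable_one_sub_mul (summable_norm_update_zero hb n) z
  rw [Multipliable.tprod_eq_mul_tprod_ite' n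
    (by convert hmul using 2 with k; by_cases k = n <;> simp [*])]
  congr 1
  exact tprod_congr fun k => by by_cases k = n <;> simp [*]

theorem hasDerivAt_tprod_one_sub_mul [DecidableEq ι] (hb : Summable fun k => ‖b k‖) (n : ι)
    (hbn : b n ≠ 0) :
    HasDerivAt (fun z => ∏' k, (1 - z * b k))
      (-b n * ∏' k, (1 - (b n)⁻¹ * update b n 0 k)) (b n)⁻¹ := by
  have hfactor : (fun z => ∏' k, (1 - z * b k)) =
      fun z => (z - (b n)⁻¹) • (-b n * ∏' k, (1 - z * update b n 0 k)) := by
    ext z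
    rw [tprod_one_sub_mul_eq_mul_tprod_update hb z n, smul_eq_mul]
    field_simp
    ring
  rw [hfactor]
  exact hasDerivAt_sub_smul
    (continuous_const.mul
      (continuous_tprod_one_sub_mul (summable_norm_update_zero hb n))).continuousAt

theorem summable_log_norm_one_sub (hb : Summable fun k => ‖b k‖) :
    Summable fun k => Real.log ‖1 - b k‖ := by
  simpa [sub_eq_add_neg] using
    Summable.summable_log_norm_one_add (f := fun k => -b k) (by simpa using hb)

theorem norm_tprod_one_sub (hb : Summable fun k => ‖b k‖) (hb1 : ∀ k, b k ≠ 1) :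
    ‖∏' k, (1 - b k)‖ = Real.exp (∑' k, Real.log ‖1 - b k‖) := by
  rw [Multipliable.norm_tprod, Real.rexp_tsum_eq_tprod
    (fun k => norm_pos_iff.2 (sub_ne_zero.2 (hb1 k).symm)) (summable_log_norm_one_sub hb)]
  simpa [sub_eq_add_neg] using
    multipliable_one_add_of_summable (f := fun k => -b k) (by simpa using hb)

end CanonicalProduct

theorem log_one_sub_norm_le_log_norm_one_sub {R : Type*} [SeminormedRing R] [NormOneClass R]
    {w : R} (hw : ‖w‖ < 1) : Real.log (1 - ‖w‖) ≤ Real.log ‖1 - w‖ :=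
  Real.log_le_log (by linarith) (by simpa using norm_sub_norm_le (1 : R) w)

theorem log_norm_one_sub_le_log_one_add_norm {R : Type*} [SeminormedRing R] [NormOneClass R]
    {w : R} (hw : ‖w‖ < 1) : Real.log ‖1 - w‖ ≤ Real.log (1 + ‖w‖) :=
  Real.log_le_log ((sub_pos.2 hw).trans_le (by simpa using norm_sub_norm_le (1 : R) w))
    (by simpa using norm_sub_le (1 : R) w)

theorem two_mul_tsum_log_one_sub_le {x s r : ℕ → ℝ} {n : ℕ} (hx : Summable x)
    (hx0 : ∀ j, 0 ≤ x j) (hx1 : ∀ j, x j ≤ 1) (hs : ∀ j < n, Real.log (1 - x j) ≤ s j)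
    (hr : Summable r) (hxr : ∀ j, Real.log (1 - x j) ≤ r j) :
    2 * ∑' j, Real.log (1 - x j) ≤ ∑ j ∈ range n, s j + ∑' j, r j := by
  have hL : Summable fun j => Real.log (1 - x j) := by
    simpa [sub_eq_add_neg] using Real.summable_log_one_add_of_summable hx.neg
  have hfinite : ∑' j, Real.log (1 - x j) ≤ ∑ j ∈ range n, s j :=
    calc ∑' j, Real.log (1 - x j)
        = ∑ j ∈ range n, Real.log (1 - x j) + ∑' j, Real.log (1 - x (j + n)) :=
          (hL.sum_add_tsum_nat_add n).symm
      _ ≤ ∑ j ∈ range n, s j + 0 := by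
          gcongr with j hj
          · exact hs j (mem_range.1 hj)
          · exact tsum_nonpos fun j =>
              Real.log_nonpos (sub_nonneg.2 (hx1 _)) (sub_le_self _ (hx0 _))
      _ = ∑ j ∈ range n, s j := add_zero _
  linarith [hL.tsum_le_tsum hxr hr]

theorem le_two_mul_tsum_log_one_add {x s r : ℕ → ℝ} {n : ℕ} (hx : Summable x)
    (hx0 : ∀ j, 0 ≤ x j) (hs : ∀ j < n, s j ≤ Real.log (1 + x j))
    (hr : Summable r) (hxr : ∀ j, r j ≤ Real.log (1 + x j)) :
    ∑ j ∈ range n, s j + ∑' j, r j ≤ 2 * ∑' j, Real.log (1 + x j) := by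
  have hU := Real.summable_log_one_add_of_summable hx
  have hfinite : ∑ j ∈ range n, s j ≤ ∑' j, Real.log (1 + x j) :=
    (sum_le_sum fun j hj => hs j (mem_range.1 hj)).trans
      (hU.sum_le_tsum _ fun j _ => Real.log_nonneg (le_add_of_nonneg_right (hx0 j)))
  linarith [hr.tsum_le_tsum hxr hU]

noncomputable def zeroSeq (θ : ℕ → ℝ) (n : ℕ) : ℂ :=
  Complex.exp (((n + 1 : ℝ) / 2 : ℂ) + (θ n : ℂ) * Complex.I)

noncomputable def zeroRatio (j : ℕ) : ℝ := Real.exp (-(((j : ℝ) + 1) / 2))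

theorem zeroRatio_nonneg (j : ℕ) : 0 ≤ zeroRatio j := (Real.exp_pos _).le

theorem zeroRatio_lt_one (j : ℕ) : zeroRatio j < 1 :=
  Real.exp_lt_one_iff.2 (neg_neg_of_pos (by positivity))

theorem summable_zeroRatio : Summable zeroRatio := by
  have hq : Real.exp (-(1 / 2 : ℝ)) < 1 := Real.exp_lt_one_iff.2 (by norm_num)
  refine ((summable_geometric_of_lt_one (Real.exp_pos _).le hq).mul_left
    (Real.exp (-(1 / 2)))).congr fun j => ?_
  rw [zeroRatio, ← Real.exp_nat_mul, ← Real.exp_add]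
  ring_nf

section zeroSeq

variable (θ : ℕ → ℝ)

theorem norm_zeroSeq (n : ℕ) : ‖zeroSeq θ n‖ = Real.exp (((n : ℝ) + 1) / 2) := by
  simp [zeroSeq, Complex.norm_exp]

theorem zeroSeq_ne_zero (n : ℕ) : zeroSeq θ n ≠ 0 := Complex.exp_ne_zero _

theorem zeroSeq_injective : Injective (zeroSeq θ) := fun m n h => by
  have := congrArg norm h
  rw [norm_zeroSeq, norm_zeroSeq, Real.exp_eq_exp] at this
  exact_mod_cast (by linarith : (m : ℝ) = n)

theorem norm_inv_zeroSeq (n : ℕ) : ‖(zeroSeq θ n)⁻¹‖ = zeroRatio n := by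
  rw [norm_inv, norm_zeroSeq, zeroRatio, Real.exp_neg]

theorem summable_norm_inv_zeroSeq : Summable fun n => ‖(zeroSeq θ n)⁻¹‖ := by
  simpa only [norm_inv_zeroSeq] using summable_zeroRatio

theorem norm_zeroSeq_div_zeroSeq (i j : ℕ) :
    ‖zeroSeq θ i / zeroSeq θ (i + j + 1)‖ = zeroRatio j := by
  rw [norm_div, norm_zeroSeq, norm_zeroSeq, zeroRatio, ← Real.exp_sub]
  push_cast
  ring_nf

theorem log_norm_one_sub_zeroSeq_div_zeroSeq (i j : ℕ) :
    Real.log ‖1 - zeroSeq θ (i + j + 1) / zeroSeq θ i‖ =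
      ((j : ℝ) + 1) / 2 + Real.log ‖1 - zeroSeq θ i / zeroSeq θ (i + j + 1)‖ := by
  set w := zeroSeq θ i / zeroSeq θ (i + j + 1)
  have hw : w ≠ 0 := div_ne_zero (zeroSeq_ne_zero θ i) (zeroSeq_ne_zero θ _)
  have hw1 : 1 - w ≠ 0 := by
    intro h
    have := congrArg norm (sub_eq_zero.1 h)
    rw [norm_one, norm_zeroSeq_div_zeroSeq] at this
    exact (zeroRatio_lt_one j).ne' this
  have hfactor : 1 - w⁻¹ = -w⁻¹ * (1 - w) := by field_simp; ring
  rw [← inv_div, hfactor, norm_mul, norm_neg, norm_inv, Real.log_mul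
    (inv_ne_zero (norm_ne_zero_iff.2 hw)) (norm_ne_zero_iff.2 hw1), Real.log_inv,
    norm_zeroSeq_div_zeroSeq, zeroRatio, Real.log_exp, neg_neg]

theorem sum_range_log_norm_one_sub_zeroSeq_div (n : ℕ) :
    ∑ k ∈ range n, Real.log ‖1 - zeroSeq θ n / zeroSeq θ k‖ =
      (n : ℝ) * (n + 1) / 4 +
        ∑ j ∈ range n, Real.log ‖1 - zeroSeq θ (n - 1 - j) / zeroSeq θ n‖ := by
  have hgauss : ∀ m : ℕ, ∑ j ∈ range m, ((j : ℝ) + 1) / 2 = (m : ℝ) * (m + 1) / 4 := by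
    intro m
    induction m with
    | zero => simp
    | succ m ih => rw [sum_range_succ, ih]; push_cast; ring
  rw [← sum_range_reflect, ← hgauss, ← sum_add_distrib]
  refine sum_congr rfl fun j hj => ?_
  obtain ⟨i, rfl⟩ : ∃ i, n = i + j + 1 := ⟨n - 1 - j, by have := mem_range.1 hj; omega⟩
  rw [show i + j + 1 - 1 - j = i by omega, log_norm_one_sub_zeroSeq_div_zeroSeq]

theorem log_norm_one_sub_mem_Icc_of_norm_eq_zeroRatio {w : ℂ} {j : ℕ} (hw : ‖w‖ = zeroRatio j) :
    Real.log ‖1 - w‖ ∈ Set.Icc (Real.log (1 - zeroRatio j)) (Real.log (1 + zeroRatio j)) := by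
  rw [← hw]
  have hw1 : ‖w‖ < 1 := hw ▸ zeroRatio_lt_one j
  exact ⟨log_one_sub_norm_le_log_norm_one_sub hw1, log_norm_one_sub_le_log_one_add_norm hw1⟩

theorem summable_norm_zeroSeq_mul_update (n : ℕ) :
    Summable fun k => ‖zeroSeq θ n * update (fun k => (zeroSeq θ k)⁻¹) n 0 k‖ := by
  simpa only [norm_mul] using
    (summable_norm_update_zero (summable_norm_inv_zeroSeq θ) n).mul_left ‖zeroSeq θ n‖

theorem tsum_log_norm_one_sub_zeroSeq_eq (n : ℕ) :
    ∑' k, Real.log ‖1 - zeroSeq θ n * update (fun k => (zeroSeq θ k)⁻¹) n 0 k‖ =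
      (n : ℝ) * (n + 1) / 4 +
        (∑ j ∈ range n, Real.log ‖1 - zeroSeq θ (n - 1 - j) / zeroSeq θ n‖ +
          ∑' j, Real.log ‖1 - zeroSeq θ n / zeroSeq θ (n + j + 1)‖) := by
  set t : ℕ → ℝ := fun k =>
    Real.log ‖1 - zeroSeq θ n * update (fun k => (zeroSeq θ k)⁻¹) n 0 k‖
  have ht : Summable t := summable_log_norm_one_sub (summable_norm_zeroSeq_mul_update θ n)
  have hhead : ∀ k ∈ range n, t k = Real.log ‖1 - zeroSeq θ n / zeroSeq θ k‖ := fun k hk => by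
    simp [t, update_of_ne (mem_range.1 hk).ne, div_eq_mul_inv]
  have htail : ∀ j, t (j + (n + 1)) = Real.log ‖1 - zeroSeq θ n / zeroSeq θ (n + j + 1)‖ :=
    fun j => by
      rw [show n + j + 1 = j + (n + 1) by ring]
      simp [t, update_of_ne (by omega : j + (n + 1) ≠ n), div_eq_mul_inv]
  have hn : t n = 0 := by simp [t]
  rw [← ht.sum_add_tsum_nat_add (n + 1), sum_range_succ, sum_congr rfl hhead,
    sum_range_log_norm_one_sub_zeroSeq_div, hn, add_zero, tsum_congr htail, add_assoc]

theorem tsum_log_norm_one_sub_zeroSeq_mem_Icc (n : ℕ) :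
    ∑' k, Real.log ‖1 - zeroSeq θ n * update (fun k => (zeroSeq θ k)⁻¹) n 0 k‖ ∈
      Set.Icc ((n : ℝ) * (n + 1) / 4 + 2 * ∑' j, Real.log (1 - zeroRatio j))
        ((n : ℝ) * (n + 1) / 4 + 2 * ∑' j, Real.log (1 + zeroRatio j)) := by
  have hhead : ∀ j < n, ‖zeroSeq θ (n - 1 - j) / zeroSeq θ n‖ = zeroRatio j := by
    intro j hj
    obtain ⟨i, rfl⟩ : ∃ i, n = i + j + 1 := ⟨n - 1 - j, by omega⟩
    rw [show i + j + 1 - 1 - j = i by omega, norm_zeroSeq_div_zeroSeq]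
  have htail := norm_zeroSeq_div_zeroSeq θ n
  have hsum : Summable fun j => Real.log ‖1 - zeroSeq θ n / zeroSeq θ (n + j + 1)‖ :=
    summable_log_norm_one_sub (by simpa only [htail] using summable_zeroRatio)
  rw [tsum_log_norm_one_sub_zeroSeq_eq, Set.mem_Icc]
  constructor
  · linarith [two_mul_tsum_log_one_sub_le summable_zeroRatio zeroRatio_nonneg
      (fun j => (zeroRatio_lt_one j).le)
      (fun j hj => (log_norm_one_sub_mem_Icc_of_norm_eq_zeroRatio (hhead j hj)).1)
      hsum (fun j => (log_norm_one_sub_mem_Icc_of_norm_eq_zeroRatio (htail j)).1)]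
  · linarith [le_two_mul_tsum_log_one_add summable_zeroRatio zeroRatio_nonneg
      (fun j hj => (log_norm_one_sub_mem_Icc_of_norm_eq_zeroRatio (hhead j hj)).2)
      hsum (fun j => (log_norm_one_sub_mem_Icc_of_norm_eq_zeroRatio (htail j)).2)]

theorem norm_deriv_tprod_one_sub_div_zeroSeq (n : ℕ) :
    ‖deriv (fun z => ∏' k, (1 - z / zeroSeq θ k)) (zeroSeq θ n)‖ = ‖zeroSeq θ n‖⁻¹ *
      Real.exp (∑' k, Real.log ‖1 - zeroSeq θ n * update (fun k => (zeroSeq θ k)⁻¹) n 0 k‖) := by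
  have hderiv := hasDerivAt_tprod_one_sub_mul (summable_norm_inv_zeroSeq θ) n
    (inv_ne_zero (zeroSeq_ne_zero θ n))
  simp only [inv_inv, ← div_eq_mul_inv] at hderiv
  have hne : ∀ k, zeroSeq θ n * update (fun k => (zeroSeq θ k)⁻¹) n 0 k ≠ 1 := by
    intro k
    rcases eq_or_ne k n with rfl | hk
    · simp
    · rw [update_of_ne hk, Ne, mul_inv_eq_one₀ (zeroSeq_ne_zero θ k)]
      exact (zeroSeq_injective θ).ne hk.symm
  rw [hderiv.deriv, norm_mul, norm_neg, norm_inv,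
    norm_tprod_one_sub (summable_norm_zeroSeq_mul_update θ n) hne]

end zeroSeq

/-- `|E'(λ_n)| ≍ |λ_n|^{-3/2} e^{φ(λ_n)}` where `φ(z) = (log⁺|z|)²`,
`λ_n = exp((n+1)/2 + iθ_n)` and `E(z) = ∏ (1 - z/λ_n)`. -/
theorem derivative_estimate_at_zeros (θ : ℕ → ℝ)
    (lam : ℕ → ℂ) (hlam : ∀ n, lam n = Complex.exp (((n + 1 : ℝ) / 2 : ℂ) + (θ n : ℂ) * Complex.I))
    (φ : ℂ → ℝ) (hφ : ∀ z, φ z = (max (Real.log (‖z‖)) 0) ^ 2)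
    (E : ℂ → ℂ) (hE : ∀ z, E z = ∏' n : ℕ, (1 - z / lam n)) :
    ∃ c C : ℝ, 0 < c ∧ 0 < C ∧ ∀ n : ℕ,
      c * (‖lam n‖) ^ (-(3 : ℝ) / 2) * Real.exp (φ (lam n))
        ≤ ‖deriv E (lam n)‖ ∧
      ‖deriv E (lam n)‖
        ≤ C * (‖lam n‖) ^ (-(3 : ℝ) / 2) * Real.exp (φ (lam n)) := by
  obtain rfl : lam = zeroSeq θ := funext hlam
  obtain rfl : E = fun z => ∏' k, (1 - z / zeroSeq θ k) := funext hE
  refine ⟨Real.exp (2 * ∑' j, Real.log (1 - zeroRatio j)),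
    Real.exp (2 * ∑' j, Real.log (1 + zeroRatio j)), Real.exp_pos _, Real.exp_pos _, fun n => ?_⟩
  have hscale : ‖zeroSeq θ n‖ ^ (-(3 : ℝ) / 2) * Real.exp (φ (zeroSeq θ n)) =
      ‖zeroSeq θ n‖⁻¹ * Real.exp ((n : ℝ) * (n + 1) / 4) := by
    rw [hφ, norm_zeroSeq, Real.log_exp, max_eq_left (by positivity), ← Real.exp_mul,
      ← Real.exp_neg, ← Real.exp_add, ← Real.exp_add]
    ring_nf
  obtain ⟨hlow, hup⟩ := tsum_log_norm_one_sub_zeroSeq_mem_Icc θ n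
  rw [mul_assoc, mul_assoc, hscale, norm_deriv_tprod_one_sub_div_zeroSeq, mul_left_comm,
    mul_left_comm (Real.exp _), ← Real.exp_add, ← Real.exp_add]
  constructor <;> gcongr <;> linarith
end

section
/- For the weight φ(r) = (log⁺ r)^{1+δ} with 0 < δ < 1, the numbers w_n = log ∫_ℂ |z|^{2n} e^{-2φ(z)} dm(z) satisfy w_n = c (n+1)^{1+1/δ} + O(log n) as n → ∞, for some constant c > 0 depending only on δ. -/
/-!
In the coordinates `|z| = eᵗ` the integral becomes `2π ∫ exp (2 h t) dt` with
`h t = weightExponent δ N t = N t - (t⁺)^(1+δ)` and `N = n + 1`. The concave exponent `h` peaks at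
`t₀ = (N / (1+δ))^(1/δ)` with `2 h t₀ = c N^(1+1/δ)`. Tangent lines of `t ↦ t^(1+δ)` show that `h`
decays with slope `N` beyond the point `t₁` where the tangent slope is `2N`, and, together with
the subadditivity of `t ↦ t^δ` for `δ ≤ 1`, that `h` stays within `1 + δ` of its maximum on
`[t₀, t₀ + 1]`. So the integral lies between `exp (2 h t₀)` times `e^{-2(1+δ)}` and times
`t₁ + 1/N`; since `t₁` is polynomial in `N`, taking logarithms costs only `O(log n)`.
-/

open MeasureTheory Set Real

theorem rpow_one_add_tangent_le {δ b t : ℝ} (hδ : 0 ≤ δ) (hb : 0 < b) (ht : 0 ≤ t) :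
    b ^ (1 + δ) + (1 + δ) * b ^ δ * (t - b) ≤ t ^ (1 + δ) := by
  have hbern := one_add_mul_self_le_rpow_one_add (s := t / b - 1)
    (by linarith [div_nonneg ht hb.le]) (by linarith : 1 ≤ 1 + δ)
  rw [add_sub_cancel, div_rpow ht hb.le, le_div_iff₀ (by positivity)] at hbern
  have hb' : b ^ (1 + δ) = b ^ δ * b := by rw [rpow_add hb, rpow_one, mul_comm]
  calc b ^ (1 + δ) + (1 + δ) * b ^ δ * (t - b)
      = (1 + (1 + δ) * (t / b - 1)) * b ^ (1 + δ) := by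
        rw [hb']; field_simp
    _ ≤ t ^ (1 + δ) := hbern

theorem integrableOn_and_setIntegral_le_of_le {X : Type*} [MeasurableSpace X] {μ : Measure X}
    {f g : X → ℝ} {s : Set X} (hs : MeasurableSet s) (hf : AEStronglyMeasurable f μ)
    (hf0 : ∀ x, 0 ≤ f x) (hg : IntegrableOn g s μ) (hfg : ∀ x ∈ s, f x ≤ g x) :
    IntegrableOn f s μ ∧ ∫ x in s, f x ∂μ ≤ ∫ x in s, g x ∂μ := by
  have hfi : IntegrableOn f s μ := hg.mono' hf.restrict <| (ae_restrict_iff' hs).2 <|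
    .of_forall fun x hx ↦ by rw [norm_of_nonneg (hf0 x)]; exact hfg x hx
  exact ⟨hfi, setIntegral_mono_on hfi hg hs hfg⟩

theorem integrable_and_integral_le_of_exp_tails {f : ℝ → ℝ} (hf : AEStronglyMeasurable f)
    (hf0 : ∀ t, 0 ≤ f t) {b C μ : ℝ} (hb : 0 ≤ b) (hμ : 0 < μ)
    (hleft : ∀ t ≤ 0, f t ≤ C * exp (μ * t)) (hmid : ∀ t ∈ Ioc 0 b, f t ≤ C)
    (hright : ∀ t > b, f t ≤ C * exp (-μ * (t - b))) :
    Integrable f ∧ ∫ t, f t ≤ C * (b + 2 / μ) := by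
  obtain ⟨hi₁, hI₁⟩ := integrableOn_and_setIntegral_le_of_le measurableSet_Iic hf hf0
    ((integrableOn_exp_mul_Iic hμ 0).const_mul C) hleft
  obtain ⟨hi₂, hI₂⟩ := integrableOn_and_setIntegral_le_of_le measurableSet_Ioc hf hf0
    (integrableOn_const (C := C) measure_Ioc_lt_top.ne) hmid
  have hright' : ∀ t ∈ Ioi b, f t ≤ C * exp (μ * b) * exp (-μ * t) := fun t ht ↦ by
    rw [mul_assoc, ← exp_add]; convert hright t ht using 3; ring
  obtain ⟨hi₃, hI₃⟩ := integrableOn_and_setIntegral_le_of_le measurableSet_Ioi hf hf0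
    ((integrableOn_exp_mul_Ioi (neg_neg_of_pos hμ) b).const_mul _) hright'
  have hi₂₃ : IntegrableOn f (Ioi 0) := Ioc_union_Ioi_eq_Ioi hb ▸ hi₂.union hi₃
  refine ⟨integrableOn_univ.1 (Iic_union_Ioi (a := (0 : ℝ)) ▸ hi₁.union hi₂₃), ?_⟩
  rw [← intervalIntegral.integral_Iic_add_Ioi hi₁ hi₂₃, ← Ioc_union_Ioi_eq_Ioi hb,
    setIntegral_union Ioc_disjoint_Ioi_same measurableSet_Ioi hi₂ hi₃]
  rw [integral_const_mul, integral_exp_mul_Iic hμ, mul_zero, exp_zero] at hI₁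
  rw [integral_const_mul, integral_exp_mul_Ioi (neg_neg_of_pos hμ), neg_div_neg_eq, mul_assoc,
    mul_div_assoc', ← exp_add, neg_mul, add_neg_cancel, exp_zero] at hI₃
  rw [setIntegral_const, Real.volume_real_Ioc_of_le hb, sub_zero, smul_eq_mul] at hI₂
  calc _ ≤ C * (1 / μ) + (b * C + C * (1 / μ)) := by gcongr
    _ = C * (b + 2 / μ) := by ring

theorem integral_comp_norm_eq_integral_exp {E : Type*} [NormedAddCommGroup E] [NormedSpace ℝ E]
    (f : ℝ → E) :
    ∫ z : ℂ, f ‖z‖ = (2 * π) • ∫ t : ℝ, exp (2 * t) • f (exp t) := by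
  have hsub : ∫ r in Ioi (0 : ℝ), r • f r = ∫ t : ℝ, exp (2 * t) • f (exp t) := by
    rw [← range_exp, ← image_univ, integral_image_eq_integral_abs_deriv_smul MeasurableSet.univ
      (fun t _ ↦ (hasDerivAt_exp t).hasDerivWithinAt) exp_injective.injOn, setIntegral_univ]
    congr 1 with t
    rw [abs_of_pos (exp_pos t), smul_smul, ← exp_add, two_mul]
  rw [integral_fun_norm_addHaar volume f, ← hsub]
  simp [Complex.volume_ball, measureReal_def, ← ofNat_smul_eq_nsmul ℝ, smul_smul]

noncomputable def weightExponent (δ N t : ℝ) : ℝ := N * t - max t 0 ^ (1 + δ)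

noncomputable def weightExponentPeak (δ N : ℝ) : ℝ := (N / (1 + δ)) ^ (1 / δ)

theorem integral_norm_pow_mul_exp_rpow_logPlus (δ : ℝ) (n : ℕ) :
    ∫ z : ℂ, ‖z‖ ^ (2 * n) * exp (-2 * max (log ‖z‖) 0 ^ (1 + δ)) =
      2 * π * ∫ t, exp (2 * weightExponent δ (n + 1) t) := by
  rw [integral_comp_norm_eq_integral_exp (fun r ↦ r ^ (2 * n) * exp (-2 * max (log r) 0 ^ (1 + δ))),
    smul_eq_mul]
  congr 2 with t
  rw [log_exp, smul_eq_mul, ← exp_nat_mul, ← exp_add, ← exp_add, weightExponent]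
  push_cast
  ring_nf

section weightExponent

variable {δ N : ℝ}

theorem continuous_weightExponent (hδ : 0 ≤ δ) : Continuous (weightExponent δ N) :=
  (continuous_const.mul continuous_id).sub
    ((continuous_rpow_const (by linarith)).comp (continuous_id.max continuous_const))

theorem weightExponent_of_nonpos (hδ : 0 ≤ δ) {t : ℝ} (ht : t ≤ 0) :
    weightExponent δ N t = N * t := by
  rw [weightExponent, max_eq_right ht, zero_rpow (by linarith), sub_zero]

theorem weightExponent_of_nonneg {t : ℝ} (ht : 0 ≤ t) :
    weightExponent δ N t = N * t - t ^ (1 + δ) := by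
  rw [weightExponent, max_eq_left ht]

theorem weightExponent_le_sub_mul (hδ : 0 ≤ δ) {b t : ℝ} (hb : 0 < b) (ht : 0 ≤ t) :
    weightExponent δ N t ≤ weightExponent δ N b - ((1 + δ) * b ^ δ - N) * (t - b) := by
  rw [weightExponent_of_nonneg ht, weightExponent_of_nonneg hb.le]
  linarith [rpow_one_add_tangent_le hδ hb ht]

theorem weightExponentPeak_pos (hδ : 0 < δ) (hN : 0 < N) : 0 < weightExponentPeak δ N := by
  unfold weightExponentPeak; positivity

theorem one_add_mul_weightExponentPeak_rpow (hδ : 0 < δ) (hN : 0 ≤ N) :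
    (1 + δ) * weightExponentPeak δ N ^ δ = N := by
  rw [weightExponentPeak, ← rpow_mul (by positivity), one_div_mul_cancel hδ.ne', rpow_one]
  field_simp

theorem weightExponent_weightExponentPeak (hδ : 0 < δ) (hN : 0 ≤ N) :
    weightExponent δ N (weightExponentPeak δ N) = δ / (1 + δ) ^ (1 + 1 / δ) * N ^ (1 + 1 / δ) := by
  have hpos : 0 ≤ weightExponentPeak δ N := by unfold weightExponentPeak; positivity
  have hslope : weightExponentPeak δ N ^ δ = N / (1 + δ) := by
    rw [eq_div_iff (by positivity), mul_comm]; exact one_add_mul_weightExponentPeak_rpow hδ hN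
  have hpeak : weightExponentPeak δ N = N ^ (1 / δ) / (1 + δ) ^ (1 / δ) :=
    div_rpow hN (by positivity) _
  rw [weightExponent_of_nonneg hpos, rpow_add' hpos (by positivity), rpow_one, hslope, hpeak,
    rpow_add' hN (by positivity), rpow_add' (by positivity) (by positivity), rpow_one, rpow_one]
  field_simp
  ring

theorem weightExponent_le_weightExponentPeak (hδ : 0 < δ) (hN : 0 < N) (t : ℝ) :
    weightExponent δ N t ≤ weightExponent δ N (weightExponentPeak δ N) := by
  have hslope := one_add_mul_weightExponentPeak_rpow hδ hN.le
  have hnonneg (s : ℝ) (hs : 0 ≤ s) :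
      weightExponent δ N s ≤ weightExponent δ N (weightExponentPeak δ N) := by
    simpa [hslope] using weightExponent_le_sub_mul (N := N) hδ.le (weightExponentPeak_pos hδ hN) hs
  rcases le_total 0 t with ht | ht
  · exact hnonneg t ht
  · calc weightExponent δ N t = N * t := weightExponent_of_nonpos hδ.le ht
      _ ≤ weightExponent δ N 0 := by rw [weightExponent_of_nonpos hδ.le le_rfl]; nlinarith
      _ ≤ _ := hnonneg 0 le_rfl

theorem weightExponent_le_sub_of_weightExponentPeak_two_mul_le (hδ : 0 < δ) (hN : 0 < N) {t : ℝ}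
    (ht : weightExponentPeak δ (2 * N) ≤ t) :
    weightExponent δ N t ≤
      weightExponent δ N (weightExponentPeak δ N) - N * (t - weightExponentPeak δ (2 * N)) := by
  have hpos := weightExponentPeak_pos hδ (by positivity : 0 < 2 * N)
  have h := weightExponent_le_sub_mul (N := N) hδ.le hpos (hpos.le.trans ht)
  rw [one_add_mul_weightExponentPeak_rpow hδ (by positivity)] at h
  linarith [weightExponent_le_weightExponentPeak hδ hN (weightExponentPeak δ (2 * N))]

theorem weightExponent_weightExponentPeak_sub_le (hδ : 0 < δ) (hδ1 : δ ≤ 1) (hN : 0 < N)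
    {t : ℝ} (ht₀ : weightExponentPeak δ N ≤ t) (ht₁ : t ≤ weightExponentPeak δ N + 1) :
    weightExponent δ N (weightExponentPeak δ N) - (1 + δ) ≤ weightExponent δ N t := by
  set t₀ := weightExponentPeak δ N
  have ht₀pos : 0 < t₀ := weightExponentPeak_pos hδ hN
  have htangent := weightExponent_le_sub_mul (N := N) hδ.le (ht₀pos.trans_le ht₀) ht₀pos.le
  have hsub : t ^ δ ≤ t₀ ^ δ + 1 := by
    calc t ^ δ ≤ (t₀ + 1) ^ δ := rpow_le_rpow (ht₀pos.le.trans ht₀) ht₁ hδ.le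
      _ ≤ t₀ ^ δ + 1 ^ δ := rpow_add_le_add_rpow ht₀pos.le zero_le_one hδ.le hδ1
      _ = t₀ ^ δ + 1 := by rw [one_rpow]
  have hslope : (1 + δ) * t ^ δ - N ≤ 1 + δ := by
    rw [← one_add_mul_weightExponentPeak_rpow hδ hN.le]; nlinarith
  have hslope_nonneg : 0 ≤ (1 + δ) * t ^ δ - N := by
    rw [← one_add_mul_weightExponentPeak_rpow hδ hN.le]
    nlinarith [rpow_le_rpow ht₀pos.le ht₀ hδ.le]
  nlinarith

theorem weightExponentPeak_two_mul_add_one_div_le (hδ : 0 < δ) (hN : 1 ≤ N) :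
    weightExponentPeak δ (2 * N) + 1 / N ≤ 2 * (2 * N) ^ (1 / δ) := by
  have hpeak : weightExponentPeak δ (2 * N) ≤ (2 * N) ^ (1 / δ) :=
    rpow_le_rpow (by positivity) (div_le_self (by positivity) (by linarith)) (by positivity)
  have hone : 1 / N ≤ (2 * N) ^ (1 / δ) :=
    ((div_le_one (by positivity)).2 hN).trans (one_le_rpow (by linarith) (by positivity))
  linarith

theorem integrable_exp_weightExponent_and_integral_le (hδ : 0 < δ) (hN : 0 < N) :
    Integrable (fun t ↦ exp (2 * weightExponent δ N t)) ∧
      ∫ t, exp (2 * weightExponent δ N t) ≤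
        exp (2 * weightExponent δ N (weightExponentPeak δ N)) *
          (weightExponentPeak δ (2 * N) + 1 / N) := by
  set m := weightExponent δ N (weightExponentPeak δ N)
  have hm : 0 ≤ m := by
    simpa [weightExponent_of_nonpos hδ.le le_rfl] using
      weightExponent_le_weightExponentPeak hδ hN 0
  have h := integrable_and_integral_le_of_exp_tails (b := weightExponentPeak δ (2 * N))
    (C := exp (2 * m)) (μ := 2 * N)
    ((continuous_weightExponent (N := N) hδ.le).const_mul 2).rexp.aestronglyMeasurable
    (fun t ↦ (exp_pos _).le) (weightExponentPeak_pos hδ (by positivity)).le (by positivity)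
    (fun t ht ↦ ?_) (fun t _ ↦ ?_) (fun t ht ↦ ?_)
  · refine ⟨h.1, h.2.trans_eq ?_⟩
    field_simp
  · rw [weightExponent_of_nonpos hδ.le ht, ← exp_add]
    gcongr
    linarith
  · gcongr
    exact weightExponent_le_weightExponentPeak hδ hN t
  · rw [← exp_add]
    gcongr
    linarith [weightExponent_le_sub_of_weightExponentPeak_two_mul_le hδ hN ht.le]

theorem exp_sub_le_integral_exp_weightExponent (hδ : 0 < δ) (hδ1 : δ ≤ 1) (hN : 0 < N) :
    exp (2 * weightExponent δ N (weightExponentPeak δ N) - 2 * (1 + δ)) ≤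
      ∫ t, exp (2 * weightExponent δ N t) := by
  set t₀ := weightExponentPeak δ N
  have hint := (integrable_exp_weightExponent_and_integral_le hδ hN).1
  calc exp (2 * weightExponent δ N t₀ - 2 * (1 + δ))
      = exp (2 * weightExponent δ N t₀ - 2 * (1 + δ)) * volume.real (Icc t₀ (t₀ + 1)) := by
        simp
    _ ≤ ∫ t in Icc t₀ (t₀ + 1), exp (2 * weightExponent δ N t) :=
        setIntegral_ge_of_const_le_real measurableSet_Icc measure_Icc_lt_top.ne
          (fun t ht ↦ by
            gcongr
            linarith [weightExponent_weightExponentPeak_sub_le hδ hδ1 hN ht.1 ht.2])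
          hint.integrableOn
    _ ≤ ∫ t, exp (2 * weightExponent δ N t) :=
        setIntegral_le_integral hint (.of_forall fun t ↦ (exp_pos _).le)

theorem abs_log_integral_exp_weightExponent_sub_le (hδ : 0 < δ) (hδ1 : δ ≤ 1) (hN : 1 ≤ N) :
    |log (2 * π * ∫ t, exp (2 * weightExponent δ N t))
        - 2 * weightExponent δ N (weightExponentPeak δ N)| ≤
      4 + log (4 * π) + log (2 * N) / δ := by
  set J := ∫ t, exp (2 * weightExponent δ N t)
  set m := weightExponent δ N (weightExponentPeak δ N)
  have hJ_lower := exp_sub_le_integral_exp_weightExponent hδ hδ1 (by linarith : 0 < N)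
  have hJ_upper := (integrable_exp_weightExponent_and_integral_le hδ (by linarith : 0 < N)).2
  have hJ : 0 < J := (exp_pos _).trans_le hJ_lower
  have hupper : log (2 * π * J) ≤ 2 * m + log (4 * π) + log (2 * N) / δ := by
    calc log (2 * π * J) ≤ log (2 * π * (exp (2 * m) * (2 * (2 * N) ^ (1 / δ)))) := by
          gcongr
          exact hJ_upper.trans (by gcongr; exact weightExponentPeak_two_mul_add_one_div_le hδ hN)
      _ = 2 * m + log (4 * π) + log (2 * N) / δ := by
          rw [show 2 * π * (exp (2 * m) * (2 * (2 * N) ^ (1 / δ))) =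
              exp (2 * m) * (4 * π) * (2 * N) ^ (1 / δ) by ring,
            log_mul (by positivity) (by positivity), log_mul (by positivity) (by positivity),
            log_exp, log_rpow (by positivity)]
          ring
  have hlower : 2 * m - 2 * (1 + δ) ≤ log (2 * π * J) := by
    calc 2 * m - 2 * (1 + δ) ≤ log J := (le_log_iff_exp_le hJ).2 hJ_lower
      _ ≤ log (2 * π * J) := by
          gcongr
          exact le_mul_of_one_le_left hJ.le (by linarith [pi_gt_three])
  have hlog : 0 ≤ log (4 * π) := log_nonneg (by linarith [pi_gt_three])
  have hlogN : 0 ≤ log (2 * N) / δ := div_nonneg (log_nonneg (by linarith)) hδ.le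
  rw [abs_sub_le_iff]
  constructor <;> linarith

end weightExponent

theorem log_two_mul_add_one_le (n : ℕ) (hn : 2 ≤ n) : log (2 * ((n : ℝ) + 1)) ≤ 3 * log n := by
  have hn' : (2 : ℝ) ≤ n := by exact_mod_cast hn
  have hcube : 2 * ((n : ℝ) + 1) ≤ (n : ℝ) ^ 3 := by
    nlinarith [mul_le_mul hn' hn' zero_le_two (by positivity)]
  calc log (2 * ((n : ℝ) + 1)) ≤ log ((n : ℝ) ^ 3) := log_le_log (by positivity) hcube
    _ = 3 * log n := by rw [log_pow]; norm_num

/-- For `φ(r) = (log⁺ r)^{1+δ}` with `0 < δ < 1`, the numbers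
`w_n = log ∫ |z|^{2n} e^{-2φ(z)} dm(z)` satisfy
`w_n = c (n+1)^{1+1/δ} + O(log n)` as `n → ∞`. -/
theorem monomial_norm_log_asymptotics (δ : ℝ) (hδ0 : 0 < δ) (hδ1 : δ < 1)
    (φ : ℂ → ℝ) (hφ : ∀ z, φ z = (max (Real.log ‖z‖) 0) ^ (1 + δ))
    (w : ℕ → ℝ)
    (hw : ∀ n, w n = Real.log (∫ z : ℂ, ‖z‖ ^ (2 * n) * Real.exp (-2 * φ z))) :
    ∃ c : ℝ, 0 < c ∧ ∃ C : ℝ, 0 < C ∧ ∀ n : ℕ, 2 ≤ n →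
      |w n - c * ((n : ℝ) + 1) ^ (1 + 1 / δ)| ≤ C * Real.log n := by
  have hlog4π : 0 ≤ log (4 * π) := log_nonneg (by linarith [pi_gt_three])
  refine ⟨2 * (δ / (1 + δ) ^ (1 + 1 / δ)), by positivity,
    (4 + log (4 * π)) / log 2 + 3 / δ, by positivity, fun n hn ↦ ?_⟩
  have hkey := abs_log_integral_exp_weightExponent_sub_le hδ0 hδ1.le
    (le_add_of_nonneg_left (Nat.cast_nonneg n) : 1 ≤ (n : ℝ) + 1)
  rw [weightExponent_weightExponentPeak hδ0 (by positivity), ← mul_assoc] at hkey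
  simp only [hw, hφ]
  rw [integral_norm_pow_mul_exp_rpow_logPlus]
  have hconst : 4 + log (4 * π) ≤ (4 + log (4 * π)) / log 2 * log n := by
    rw [div_mul_eq_mul_div, le_div_iff₀ (log_pos one_lt_two)]
    gcongr
    exact_mod_cast hn
  have hgrowth : log (2 * ((n : ℝ) + 1)) / δ ≤ 3 / δ * log n := by
    rw [div_mul_eq_mul_div]
    gcongr
    exact log_two_mul_add_one_le n hn
  linarith
end

section
/- For every A > 0 there exists a constant C ∈ ℝ such that for all integers n > 0 and s ≥ 0 with s ≠ n: ((n-s)/2)·[(n+2)^{1+1/δ} - n^{1+1/δ}] + (s+1)^{1+1/δ} - (n+1)^{1+1/δ} ≥ C + A|n-s| log(n+2) + A log(s+2). -/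
/-!
Put `p = 1 + 1/δ > 2` and `f t = t^p`. The left-hand side is `tangentGap f n (s - n)`, the height
of `f (s+1)` above the line through `(n+1, f (n+1))` whose slope is the central difference
`(f (n+2) - f n)/2`. The second differences of `f` at `t` are at least `p(p-1)t^(p-2)`, so summing
first differences, with `m = |n - s|`, the gap is at least `p(p-1)(m(m-1)/2 + n^(p-2) m/2)`.
The term `n^(p-2) m` beats `A m log(n+2)` because a power beats a logarithm,
`log(s+2) ≤ log(n+2) + m`, and the quadratic term absorbs what is left, which is linear in `m`.
-/

open Real Set
open scoped fwdDiff

noncomputable def tangentGap (f : ℝ → ℝ) (x k : ℝ) : ℝ :=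
  f (x + 1 + k) - f (x + 1) - k * ((f (x + 2) - f x) / 2)

section SecondDifference

variable {f : ℝ → ℝ} {a b c x : ℝ}

lemma mul_natCast_le_fwdDiff_add_sub_fwdDiff (hf : ∀ y, a ≤ y → c ≤ Δ_[1] (Δ_[1] f) y)
    {y : ℝ} (hy : a ≤ y) (k : ℕ) : c * k ≤ Δ_[1] f (y + k) - Δ_[1] f y := by
  induction k with
  | zero => simp
  | succ k ih =>
    have hk := hf (y + k) (by linarith [k.cast_nonneg (α := ℝ)])
    simp only [fwdDiff] at hk ih ⊢
    rw [Nat.cast_succ, ← add_assoc]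
    linarith

lemma le_tangentGap_neg_natCast (hf : ∀ y, a ≤ y → c ≤ Δ_[1] (Δ_[1] f) y)
    (hb : b ≤ Δ_[1] (Δ_[1] f) x) :
    ∀ m : ℕ, a + m ≤ x + 1 → c * (m * (m - 1) / 2) + b / 2 * m ≤ tangentGap f x (-m)
  | 0, _ => by simp [tangentGap]
  | m + 1, hm => by
    push_cast at hm ⊢
    have ih := le_tangentGap_neg_natCast hf hb m (by linarith)
    have htel := mul_natCast_le_fwdDiff_add_sub_fwdDiff hf (y := x - m) (by linarith) m
    simp only [tangentGap, fwdDiff, sub_add_cancel] at hb htel ih ⊢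
    rw [show x + 1 + -(m + 1) = x - m by ring]
    rw [show x - m + 1 = x + 1 + -m by ring] at htel
    rw [show x + 1 + 1 = x + 2 by ring] at hb
    linarith

lemma le_tangentGap_natCast (hf : ∀ y, a ≤ y → c ≤ Δ_[1] (Δ_[1] f) y)
    (hb : b ≤ Δ_[1] (Δ_[1] f) x) (hx : a ≤ x + 1) :
    ∀ m : ℕ, c * (m * (m - 1) / 2) + b / 2 * m ≤ tangentGap f x m
  | 0 => by simp [tangentGap]
  | m + 1 => by
    push_cast
    have ih := le_tangentGap_natCast hf hb hx m
    have htel := mul_natCast_le_fwdDiff_add_sub_fwdDiff hf hx m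
    simp only [tangentGap, fwdDiff] at hb htel ih ⊢
    rw [show x + 1 + (m + 1) = x + 1 + m + 1 by ring]
    rw [show x + 1 + 1 = x + 2 by ring] at htel hb
    linarith

lemma le_tangentGap_natCast_sub_natCast (hf : ∀ y, 1 ≤ y → c ≤ Δ_[1] (Δ_[1] f) y) (n s : ℕ)
    (hb : b ≤ Δ_[1] (Δ_[1] f) n) :
    c * (|(n : ℝ) - s| * (|(n : ℝ) - s| - 1) / 2) + b / 2 * |(n : ℝ) - s|
      ≤ tangentGap f n (s - n) := by
  rcases le_total s n with hsn | hns
  · obtain ⟨m, rfl⟩ := Nat.exists_eq_add_of_le hsn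
    have := le_tangentGap_neg_natCast hf hb m (by push_cast; linarith [s.cast_nonneg (α := ℝ)])
    push_cast at this ⊢
    rwa [add_sub_cancel_left, abs_of_nonneg m.cast_nonneg, sub_add_cancel_left]
  · obtain ⟨m, rfl⟩ := Nat.exists_eq_add_of_le hns
    have := le_tangentGap_natCast hf hb (by linarith [n.cast_nonneg (α := ℝ)]) m
    push_cast at this ⊢
    rwa [sub_add_cancel_left, abs_neg, abs_of_nonneg m.cast_nonneg, add_sub_cancel_left]

end SecondDifference

lemma mul_rpow_sub_one_le_fwdDiff_rpow {q t : ℝ} (hq : 1 ≤ q) (ht : 0 ≤ t) :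
    q * t ^ (q - 1) ≤ Δ_[1] (fun x ↦ x ^ q) t := by
  have := (convexOn_rpow hq).le_slope_of_hasDerivAt (x := t) (y := t + 1) ht (mem_Ici.2 (by positivity))
    (lt_add_one t) (hasDerivAt_rpow_const (Or.inr hq))
  simpa [slope_def_field, fwdDiff] using this

lemma mul_rpow_sub_two_le_fwdDiff_fwdDiff_rpow {p x : ℝ} (hp : 2 ≤ p) (hx : 0 ≤ x) :
    p * (p - 1) * x ^ (p - 2) ≤ Δ_[1] (Δ_[1] (fun t ↦ t ^ p)) x := by
  have hderiv : ∀ t, HasDerivAt (Δ_[1] (fun t ↦ t ^ p))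
      (1 * p * (t + 1) ^ (p - 1) - p * t ^ (p - 1)) t := fun t ↦
    ((hasDerivAt_id t).add_const 1).rpow_const (Or.inr (by linarith)) |>.sub
      (hasDerivAt_rpow_const (Or.inr (by linarith)))
  have hdiff : Differentiable ℝ (Δ_[1] (fun t : ℝ ↦ t ^ p)) := fun t ↦ (hderiv t).differentiableAt
  have := (convex_Ici x).mul_sub_le_image_sub_of_le_deriv hdiff.continuous.continuousOn
    hdiff.differentiableOn (C := p * (p - 1) * x ^ (p - 2)) ?_ x self_mem_Ici (x + 1)
    (by simp) (by linarith)
  · simpa [fwdDiff] using this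
  intro t ht
  rw [interior_Ici, mem_Ioi] at ht
  have hbern : (p - 1) * t ^ (p - 2) ≤ (t + 1) ^ (p - 1) - t ^ (p - 1) := by
    have := mul_rpow_sub_one_le_fwdDiff_rpow (q := p - 1) (by linarith) (by linarith : 0 ≤ t)
    rwa [sub_sub, one_add_one_eq_two] at this
  have hp1 : 0 ≤ p - 1 := by linarith
  rw [(hderiv t).deriv]
  calc p * (p - 1) * x ^ (p - 2) ≤ p * ((p - 1) * t ^ (p - 2)) := by
        rw [mul_assoc]
        gcongr
    _ ≤ p * ((t + 1) ^ (p - 1) - t ^ (p - 1)) := by gcongr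
    _ = 1 * p * (t + 1) ^ (p - 1) - p * t ^ (p - 1) := by ring

lemma log_le_log_add_abs_sub {u v : ℝ} (hu : 0 < u) (hv : 1 ≤ v) : log u ≤ log v + |u - v| := by
  have hv0 : 0 < v := by linarith
  have h := log_le_sub_one_of_pos (div_pos hu hv0)
  rw [log_div hu.ne' hv0.ne', div_sub_one hv0.ne'] at h
  have : (u - v) / v ≤ |u - v| := by
    rw [div_le_iff₀ hv0]
    linarith [le_abs_self (u - v), le_mul_of_one_le_right (abs_nonneg (u - v)) hv]
  linarith

lemma exists_mul_log_add_two_le {a b α : ℝ} (ha : 0 ≤ a) (hb : 0 < b) (hα : 0 < α) :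
    ∃ K, ∀ y, 1 ≤ y → a * log (y + 2) ≤ b * y ^ α + K := by
  set k := a / (α / 2)
  refine ⟨a * log 3 + k ^ 2 / (4 * b), fun y hy ↦ ?_⟩
  have hy0 : 0 < y := by linarith
  set u := y ^ (α / 2)
  have hlog3 : log (y + 2) ≤ log 3 + log y := by
    rw [← log_mul (by norm_num) hy0.ne']
    exact log_le_log (by linarith) (by linarith)
  have hlogy : a * log y ≤ k * u := by
    calc a * log y ≤ a * (u / (α / 2)) :=
          mul_le_mul_of_nonneg_left (log_le_rpow_div hy0.le (by positivity)) ha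
      _ = k * u := by ring
  have hyoung : k * u ≤ b * u ^ 2 + k ^ 2 / (4 * b) := by
    have : b * u ^ 2 + k ^ 2 / (4 * b) - k * u = (2 * b * u - k) ^ 2 / (4 * b) := by
      field_simp
      ring
    linarith [div_nonneg (sq_nonneg (2 * b * u - k)) (by positivity : 0 ≤ 4 * b)]
  have hu2 : u ^ 2 = y ^ α := by
    rw [← rpow_natCast, ← rpow_mul hy0.le]
    norm_num
  rw [← hu2]
  linarith [mul_le_mul_of_nonneg_left hlog3 ha]

lemma one_le_abs_natCast_sub_natCast {n s : ℕ} (h : n ≠ s) : (1 : ℝ) ≤ |(n : ℝ) - s| := by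
  have : (1 : ℤ) ≤ |(n : ℤ) - s| := Int.one_le_abs (sub_ne_zero.2 (by exact_mod_cast h))
  exact_mod_cast this

lemma neg_sq_div_le_mul_sq_sub_mul {c : ℝ} (hc : 0 < c) (B m : ℝ) :
    -(B ^ 2 / (2 * c)) ≤ c / 2 * m ^ 2 - B * m := by
  have : c / 2 * m ^ 2 - B * m + B ^ 2 / (2 * c) = (c * m - B) ^ 2 / (2 * c) := by
    field_simp
    ring
  have : 0 ≤ (c * m - B) ^ 2 / (2 * c) := by positivity
  linarith

/-- For every `A > 0` there is a constant `C` such that for all integers `n > 0`, `s ≥ 0`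
with `s ≠ n`:
`((n-s)/2)((n+2)^{1+1/δ} - n^{1+1/δ}) + (s+1)^{1+1/δ} - (n+1)^{1+1/δ}
  ≥ C + A|n-s| log(n+2) + A log(s+2)`. -/
theorem convexity_gap_inequality (δ : ℝ) (hδ0 : 0 < δ) (hδ1 : δ < 1)
    (A : ℝ) (hA : 0 < A) :
    ∃ C : ℝ, ∀ n s : ℕ, 0 < n → s ≠ n →
      ((n : ℝ) - s) / 2 * (((n : ℝ) + 2) ^ (1 + 1 / δ) - (n : ℝ) ^ (1 + 1 / δ))
        + ((s : ℝ) + 1) ^ (1 + 1 / δ) - ((n : ℝ) + 1) ^ (1 + 1 / δ)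
      ≥ C + A * |(n : ℝ) - s| * Real.log ((n : ℝ) + 2) + A * Real.log ((s : ℝ) + 2) := by
  set p := 1 + 1 / δ
  have hp : 2 < p := by linarith [one_lt_one_div hδ0 hδ1]
  set c := p * (p - 1)
  have hc : 0 < c := by nlinarith
  obtain ⟨K, hK⟩ := exists_mul_log_add_two_le (a := 2 * A) (b := c / 2) (α := p - 2)
    (by positivity) (by positivity) (by linarith)
  refine ⟨-(c / 2 + K + A) ^ 2 / (2 * c), fun n s hn hsn ↦ ?_⟩
  have hgap := le_tangentGap_natCast_sub_natCast (f := (· ^ p)) (b := c * (n : ℝ) ^ (p - 2))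
    (fun y hy ↦ (le_mul_of_one_le_right hc.le (one_le_rpow hy (by linarith))).trans
      (mul_rpow_sub_two_le_fwdDiff_fwdDiff_rpow hp.le (by linarith)))
    n s (mul_rpow_sub_two_le_fwdDiff_fwdDiff_rpow hp.le n.cast_nonneg)
  set m := |(n : ℝ) - s|
  have hm : 1 ≤ m := one_le_abs_natCast_sub_natCast hsn.symm
  have hlogn := hK n (by exact_mod_cast hn)
  have hn2 : (1 : ℝ) ≤ n + 2 := by linarith [n.cast_nonneg (α := ℝ)]
  have hlogs : log (s + 2) ≤ log (n + 2) + m := by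
    have := log_le_log_add_abs_sub (u := s + 2) (by positivity) hn2
    rwa [show (s : ℝ) + 2 - (n + 2) = -((n : ℝ) - s) by ring, abs_neg] at this
  have hL : 0 ≤ log ((n : ℝ) + 2) := log_nonneg hn2
  rw [tangentGap, show (n : ℝ) + 1 + (s - n) = s + 1 by ring] at hgap
  rw [neg_div, ge_iff_le]
  linarith [neg_sq_div_le_mul_sq_sub_mul hc (c / 2 + K + A) m,
    mul_le_mul_of_nonneg_left hlogn (by linarith : 0 ≤ m), mul_le_mul_of_nonneg_left hlogs hA.le,
    mul_nonneg (mul_nonneg hA.le hL) (sub_nonneg.2 hm)]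
end

section
/- In a Hilbert space H, if (e_n)_{n≥0} is an orthonormal basis and (v_n)_{n≥0} are unit vectors with Σ_n ‖e_n - v_n‖² < ∞, and (v_n) is complete in H, then (v_n) is a Riesz basis of H (i.e. the image of an orthonormal basis under a bounded invertible operator). -/
/-!
Write `v n = b n + d n` with `∑ ‖d n‖² < ∞`. The operator `A x = x + ∑ ⟪b n, x⟫ • d n` is bounded
and maps `b n` to `v n`. Splitting `d` into finitely many terms and a tail of `ℓ²`-norm `< 1`
writes `A = U + R` with `U` invertible (Neumann series) and `R` of finite rank, so
`A = U (1 + G)` with `G = U⁻¹ R` of finite rank. Completeness of `(v n)` says that `A` has dense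
range. The range of `1 + G` contains the closed subspace `ker G` of finite codimension, hence is
closed, so `A` is onto; and `1 + G` is onto the finite-dimensional invariant subspace `range G`,
hence injective there, which forces `ker (1 + G) ⊆ range G` to vanish.
-/

lemma Real.summable_mul_and_tsum_mul_le_sqrt_mul_sqrt {ι : Type*} {f g : ι → ℝ}
    (hf : ∀ i, 0 ≤ f i) (hg : ∀ i, 0 ≤ g i)
    (hf2 : Summable fun i => f i ^ 2) (hg2 : Summable fun i => g i ^ 2) :
    Summable (fun i => f i * g i) ∧
      ∑' i, f i * g i ≤ √(∑' i, f i ^ 2) * √(∑' i, g i ^ 2) := by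
  have := Real.summable_and_inner_le_Lp_mul_Lq_tsum_of_nonneg Real.HolderConjugate.two_two hf hg
    (by simpa only [Real.rpow_two] using hf2) (by simpa only [Real.rpow_two] using hg2)
  simpa only [Real.sqrt_eq_rpow, Real.rpow_two] using this

lemma summable_sq_norm_indicator {ι E : Type*} [SeminormedAddCommGroup E] {w : ι → E}
    (hw : Summable fun i => ‖w i‖ ^ 2) (t : Set ι) :
    Summable fun i => ‖t.indicator w i‖ ^ 2 :=
  hw.of_nonneg_of_le (fun _ => sq_nonneg _)
    fun _ => pow_le_pow_left₀ (norm_nonneg _) (norm_indicator_le_norm_self _ _) 2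

lemma exists_finset_tsum_sq_norm_indicator_compl_lt {ι E : Type*} [SeminormedAddCommGroup E]
    (w : ι → E) {ε : ℝ} (hε : 0 < ε) :
    ∃ s : Finset ι, ∑' i, ‖(↑s : Set ι)ᶜ.indicator w i‖ ^ 2 < ε := by
  obtain ⟨s, hs⟩ := ((tendsto_tsum_compl_atTop_zero fun i => ‖w i‖ ^ 2).eventually
    (gt_mem_nhds hε)).exists
  refine ⟨s, lt_of_eq_of_lt ((tsum_congr fun i => ?_).trans
    (tsum_subtype ((↑s : Set ι)ᶜ) fun i => ‖w i‖ ^ 2).symm) hs⟩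
  by_cases hi : i ∈ s <;> simp [hi]

namespace HilbertBasis

variable {ι 𝕜 E F : Type*} [RCLike 𝕜] [NormedAddCommGroup E] [InnerProductSpace 𝕜 E]
  [NormedAddCommGroup F] [NormedSpace 𝕜 F] (b : HilbertBasis ι 𝕜 E)

lemma summable_norm_inner_smul_and_tsum_le {w : ι → F} (hw : Summable fun i => ‖w i‖ ^ 2)
    (x : E) :
    Summable (fun i => ‖inner 𝕜 (b i) x • w i‖) ∧
      ∑' i, ‖inner 𝕜 (b i) x • w i‖ ≤ √(∑' i, ‖w i‖ ^ 2) * ‖x‖ := by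
  simp only [norm_smul]
  obtain ⟨hsum, hle⟩ := Real.summable_mul_and_tsum_mul_le_sqrt_mul_sqrt
    (fun _ => norm_nonneg _) (fun _ => norm_nonneg _)
    (b.orthonormal.inner_products_summable x) hw
  refine ⟨hsum, hle.trans ?_⟩
  rw [mul_comm]
  gcongr
  exact (Real.sqrt_le_left (norm_nonneg x)).2 (b.orthonormal.tsum_inner_products_le x)

variable [CompleteSpace F]

noncomputable def constrL (w : ι → F) (hw : Summable fun i => ‖w i‖ ^ 2) : E →L[𝕜] F :=
  LinearMap.mkContinuous
    { toFun x := ∑' i, inner 𝕜 (b i) x • w i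
      map_add' x y := by
        simp only [inner_add_right, add_smul]
        exact ((b.summable_norm_inner_smul_and_tsum_le hw x).1.of_norm).tsum_add
          (b.summable_norm_inner_smul_and_tsum_le hw y).1.of_norm
      map_smul' c x := by
        simp only [inner_smul_right, mul_smul, RingHom.id_apply]
        exact ((b.summable_norm_inner_smul_and_tsum_le hw x).1.of_norm).tsum_const_smul c }
    √(∑' i, ‖w i‖ ^ 2)
    fun x => (norm_tsum_le_tsum_norm (b.summable_norm_inner_smul_and_tsum_le hw x).1).trans
      (b.summable_norm_inner_smul_and_tsum_le hw x).2

variable {w : ι → F} (hw : Summable fun i => ‖w i‖ ^ 2)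

lemma constrL_apply (x : E) : b.constrL w hw x = ∑' i, inner 𝕜 (b i) x • w i := rfl

lemma constrL_apply_self (i : ι) : b.constrL w hw (b i) = w i := by
  rw [constrL_apply, tsum_eq_single i fun j hj => by simp [b.orthonormal.inner_eq_zero hj]]
  simp [b.orthonormal.1 i]

lemma norm_constrL_le : ‖b.constrL w hw‖ ≤ √(∑' i, ‖w i‖ ^ 2) :=
  LinearMap.mkContinuous_norm_le _ (Real.sqrt_nonneg _) _

lemma range_constrL_le_span (s : Finset ι) (hs : ∀ i ∉ s, w i = 0) :
    LinearMap.range (b.constrL w hw : E →ₗ[𝕜] F) ≤ Submodule.span 𝕜 (w '' s) := by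
  rintro _ ⟨x, rfl⟩
  rw [ContinuousLinearMap.coe_coe, constrL_apply, tsum_eq_sum fun i hi => by simp [hs i hi]]
  exact Submodule.sum_mem _ fun i hi =>
    Submodule.smul_mem _ _ (Submodule.subset_span ⟨i, hi, rfl⟩)

theorem exists_continuousLinearEquiv_add_finiteDimensional_range [CompleteSpace E] {w : ι → E}
    (hw : Summable fun i => ‖w i‖ ^ 2) :
    ∃ (U : E ≃L[𝕜] E) (R : E →L[𝕜] E), FiniteDimensional 𝕜 (LinearMap.range (R : E →ₗ[𝕜] E)) ∧
      ∀ i, ((U : E →L[𝕜] E) + R) (b i) = b i + w i := by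
  obtain ⟨s, hs⟩ := exists_finset_tsum_sq_norm_indicator_compl_lt w one_pos
  set K := b.constrL _ (summable_sq_norm_indicator hw (↑s : Set ι)ᶜ)
  set R := b.constrL _ (summable_sq_norm_indicator hw (↑s : Set ι))
  have hK : ‖-K‖ < 1 := by
    rw [norm_neg]
    exact (b.norm_constrL_le _).trans_lt ((Real.sqrt_lt' one_pos).2 (by simpa using hs))
  set U := ContinuousLinearEquiv.ofUnit (Units.oneSub (-K) hK)
  have hU : (U : E →L[𝕜] E) = 1 + K := by
    change ((Units.oneSub (-K) hK : (E →L[𝕜] E)ˣ) : E →L[𝕜] E) = 1 + K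
    rw [Units.val_oneSub, sub_neg_eq_add]
  have := FiniteDimensional.span_of_finite 𝕜 (s.finite_toSet.image ((↑s : Set ι).indicator w))
  refine ⟨U, R, Submodule.finiteDimensional_of_le
    (b.range_constrL_le_span _ s fun i hi => Set.indicator_of_notMem hi _), fun i => ?_⟩
  simp only [hU, add_apply, one_apply_eq_self, K, R, b.constrL_apply_self]
  rw [add_assoc, add_comm (Set.indicator _ w i), Set.indicator_self_add_compl_apply]

end HilbertBasis

theorem LinearMap.injective_one_add_of_surjective {K V : Type*} [DivisionRing K] [AddCommGroup V]
    [Module K V] {G : V →ₗ[K] V} [FiniteDimensional K (LinearMap.range G)]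
    (h : Function.Surjective ⇑(1 + G)) : Function.Injective ⇑(1 + G) := by
  set W := LinearMap.range G
  have mem_of_map_mem : ∀ x, (1 + G) x ∈ W → x ∈ W := fun x hx => by
    simpa using W.sub_mem hx (LinearMap.mem_range_self G x)
  have mapsTo : ∀ x ∈ W, (1 + G) x ∈ W := fun x hx => by
    simpa using W.add_mem hx (LinearMap.mem_range_self G x)
  have hsurj : Function.Surjective ((1 + G).restrict mapsTo) := fun y => by
    obtain ⟨x, hx⟩ := h y
    exact ⟨⟨x, mem_of_map_mem x (hx ▸ y.2)⟩, Subtype.ext hx⟩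
  refine (injective_iff_map_eq_zero _).2 fun x hx => ?_
  have hxW : x ∈ W := mem_of_map_mem x (hx ▸ W.zero_mem)
  have := LinearMap.injective_iff_surjective.2 hsurj (a₁ := ⟨x, hxW⟩) (a₂ := 0)
    (Subtype.ext (by simpa using hx))
  simpa using congrArg Subtype.val this

theorem ContinuousLinearMap.surjective_one_add_of_denseRange {𝕜 E : Type*}
    [NontriviallyNormedField 𝕜] [CompleteSpace 𝕜] [AddCommGroup E] [TopologicalSpace E]
    [IsTopologicalAddGroup E] [T1Space E] [Module 𝕜 E] [ContinuousSMul 𝕜 E] {G : E →L[𝕜] E}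
    [FiniteDimensional 𝕜 (LinearMap.range (G : E →ₗ[𝕜] E))] (h : DenseRange ⇑(1 + G)) :
    Function.Surjective ⇑(1 + G) := by
  have : FiniteDimensional 𝕜 (E ⧸ LinearMap.ker (G : E →ₗ[𝕜] E)) :=
    (G : E →ₗ[𝕜] E).quotKerEquivRange.symm.finiteDimensional
  have ker_le : LinearMap.ker (G : E →ₗ[𝕜] E) ≤ LinearMap.range ((1 + G : E →L[𝕜] E) : E →ₗ[𝕜] E) :=
    fun x hx => ⟨x, by simpa using hx⟩
  have hclosed := Submodule.isClosed_mono_of_finiteDimensional_quotient G.isClosed_ker ker_le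
  rw [← Set.range_eq_univ, ← h.closure_eq]
  exact hclosed.closure_eq.symm

theorem ContinuousLinearMap.denseRange_of_span_topologicalClosure_eq_top {𝕜 E F ι : Type*}
    [Semiring 𝕜] [TopologicalSpace E] [AddCommMonoid E] [Module 𝕜 E] [TopologicalSpace F]
    [AddCommMonoid F] [Module 𝕜 F] [ContinuousConstSMul 𝕜 F] [ContinuousAdd F] (f : E →L[𝕜] F)
    {v : ι → F} (hv : Set.range v ⊆ Set.range f)
    (hdense : (Submodule.span 𝕜 (Set.range v)).topologicalClosure = ⊤) : DenseRange f := by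
  have hspan : Submodule.span 𝕜 (Set.range v) ≤ LinearMap.range (f : E →ₗ[𝕜] F) :=
    Submodule.span_le.2 hv
  refine Submodule.dense_iff_topologicalClosure_eq_top (s := LinearMap.range (f : E →ₗ[𝕜] F)) |>.2
    (eq_top_iff.2 ?_)
  exact hdense ▸ Submodule.topologicalClosure_mono hspan

theorem ContinuousLinearEquiv.bijective_add_of_denseRange {𝕜 E : Type*}
    [NontriviallyNormedField 𝕜] [CompleteSpace 𝕜] [AddCommGroup E] [TopologicalSpace E]
    [IsTopologicalAddGroup E] [T1Space E] [Module 𝕜 E] [ContinuousSMul 𝕜 E] (U : E ≃L[𝕜] E)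
    {R : E →L[𝕜] E} [FiniteDimensional 𝕜 (LinearMap.range (R : E →ₗ[𝕜] E))]
    (h : DenseRange ⇑((U : E →L[𝕜] E) + R)) : Function.Bijective ⇑((U : E →L[𝕜] E) + R) := by
  set G : E →L[𝕜] E := (U.symm : E →L[𝕜] E).comp R
  have : FiniteDimensional 𝕜 (LinearMap.range (G : E →ₗ[𝕜] E)) := by
    change FiniteDimensional 𝕜 (LinearMap.range ((U.symm : E →ₗ[𝕜] E) ∘ₗ (R : E →ₗ[𝕜] E)))
    rw [LinearMap.range_comp]
    infer_instance
  have factor : (U : E →L[𝕜] E) + R = (U : E →L[𝕜] E).comp (1 + G) := by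
    ext x; simp [G]
  have hdense : DenseRange ⇑(1 + G) := by
    have := U.symm.surjective.denseRange.comp h U.symm.continuous
    convert this using 1
    ext x; simp [G]
  have hsurj := ContinuousLinearMap.surjective_one_add_of_denseRange hdense
  rw [factor, ContinuousLinearMap.coe_comp]
  exact U.bijective.comp
    ⟨LinearMap.injective_one_add_of_surjective (G := (G : E →ₗ[𝕜] E)) hsurj, hsurj⟩

theorem bari_quadratically_close_general
    {H : Type*} [NormedAddCommGroup H] [InnerProductSpace ℂ H] [CompleteSpace H]
    (b : HilbertBasis ℕ ℂ H) (v : ℕ → H)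
    (hclose : Summable (fun n => ‖b n - v n‖ ^ 2))
    (hcomplete : (Submodule.span ℂ (Set.range v)).topologicalClosure = ⊤) :
    ∃ T : H ≃L[ℂ] H, ∀ n, T (b n) = v n := by
  have hd : Summable fun n => ‖v n - b n‖ ^ 2 := by simpa only [norm_sub_rev] using hclose
  obtain ⟨U, R, _, hUR⟩ := b.exists_continuousLinearEquiv_add_finiteDimensional_range hd
  have hA : ∀ n, ((U : H →L[ℂ] H) + R) (b n) = v n := fun n => by
    rw [hUR, add_sub_cancel]
  have hdense := ContinuousLinearMap.denseRange_of_span_topologicalClosure_eq_top _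
    (Set.range_subset_iff.2 fun n => ⟨b n, hA n⟩) hcomplete
  obtain ⟨hinj, hsurj⟩ := U.bijective_add_of_denseRange hdense
  exact ⟨.ofBijective _ (LinearMap.ker_eq_bot.2 hinj) (LinearMap.range_eq_top.2 hsurj), hA⟩

/-- Bari's theorem on quadratically close systems: if `(e_n)` is an orthonormal basis of a
Hilbert space `H`, `(v_n)` are unit vectors with `Σ ‖e_n - v_n‖² < ∞`, and `(v_n)` is
complete, then `(v_n)` is a Riesz basis, i.e. the image of an orthonormal basis under a
bounded invertible operator. -/
theorem bari_quadratically_close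
    {H : Type*} [NormedAddCommGroup H] [InnerProductSpace ℂ H] [CompleteSpace H]
    (b : HilbertBasis ℕ ℂ H) (v : ℕ → H)
    (hnorm : ∀ n, ‖v n‖ = 1)
    (hclose : Summable (fun n => ‖b n - v n‖ ^ 2))
    (hcomplete : (Submodule.span ℂ (Set.range v)).topologicalClosure = ⊤) :
    ∃ T : H ≃L[ℂ] H, ∀ n, T (b n) = v n :=
  bari_quadratically_close_general b v hclose hcomplete
end

section
/- There is a constant C such that ‖E_λ‖²_φ ≤ C for all λ ∈ Λ, where ‖E_λ‖²_φ ≍ ∫_ℂ |λ| dist(z,Λ)² / ((1+|z|³)|z-λ|²) dm(z); specifically, the integral ∫_ℂ |λ| dist(z,Λ)²/((1+|z|³)|z-λ|²) dm(z) is bounded uniformly in λ ∈ Λ. -/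
/-!
With `R = ‖λ‖ ≥ 1`, the bounds `dist(z, Λ) ≤ ‖z - λ‖` and `dist(z, Λ) ≤ ‖z‖ + ‖λ₀‖ ≤ ‖z‖ + 2`
dominate the integrand by a radial function of `r = ‖z‖`: `56 / (R (1 + r))` for `r ≤ R / 2`
(there `‖z - λ‖ ≥ R / 2`), `8 / R²` for `R / 2 < r ≤ 2R` (there `dist(z, Λ) / ‖z - λ‖ ≤ 1`),
and `16 R / r³` for `r > 2R` (there `‖z - λ‖ ≥ r / 2`). In polar coordinates each piece
has integral bounded independently of `R`.
-/

open MeasureTheory Complex Set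

theorem Complex.integral_comp_norm {F : Type*} [NormedAddCommGroup F] [NormedSpace ℝ F]
    (g : ℝ → F) : ∫ z : ℂ, g ‖z‖ = (2 * Real.pi) • ∫ r in Ioi (0 : ℝ), r • g r := by
  rw [integral_fun_norm_addHaar, Complex.finrank_real_complex, measureReal_def,
    Complex.volume_ball, mul_smul, ← Nat.cast_smul_eq_nsmul ℝ]
  simp

theorem Complex.integrable_comp_norm_iff {F : Type*} [NormedAddCommGroup F] [NormedSpace ℝ F]
    {g : ℝ → F} : Integrable (fun z : ℂ => g ‖z‖) ↔ IntegrableOn (fun r => r • g r) (Ioi 0) := by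
  rw [integrable_fun_norm_addHaar, Complex.finrank_real_complex]
  simp

noncomputable def nearMajorant (R : ℝ) : ℝ → ℝ :=
  (Iic (R / 2)).indicator fun r => 56 / (R * (1 + r))

noncomputable def middleMajorant (R : ℝ) : ℝ → ℝ := (Iic (2 * R)).indicator fun _ => 8 / R ^ 2

noncomputable def farMajorant (R : ℝ) : ℝ → ℝ := (Ioi (2 * R)).indicator fun r => 16 * R / r ^ 3

noncomputable def kernelMajorant (R : ℝ) : ℝ → ℝ :=
  nearMajorant R + middleMajorant R + farMajorant R

theorem kernel_le_of_le_half {R a b r : ℝ} (hR : 0 < R) (ha : 0 ≤ a) (hr : 0 ≤ r)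
    (har : a ≤ r + 2) (hrR : r ≤ R / 2) (hb : R - r ≤ b) :
    R * a ^ 2 / ((1 + r ^ 3) * b ^ 2) ≤ 56 / (R * (1 + r)) := by
  calc R * a ^ 2 / ((1 + r ^ 3) * b ^ 2) ≤ R * (r + 2) ^ 2 / ((1 + r ^ 3) * (R / 2) ^ 2) := by
        gcongr; linarith
    _ = 4 * (r + 2) ^ 2 / (R * (1 + r ^ 3)) := by field_simp; ring
    _ ≤ 56 / (R * (1 + r)) := by
        have key : (r + 2) ^ 2 * (1 + r) ≤ 14 * (1 + r ^ 3) := by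
          nlinarith [sq_nonneg (r - 1), mul_nonneg hr (sq_nonneg (r - 1))]
        rw [div_le_div_iff₀ (by positivity) (by positivity)]
        nlinarith [mul_le_mul_of_nonneg_left key hR.le]

theorem kernel_le_of_half_le {R a b r : ℝ} (hR : 0 < R) (ha : 0 ≤ a) (hab : a ≤ b)
    (hrR : R / 2 ≤ r) : R * a ^ 2 / ((1 + r ^ 3) * b ^ 2) ≤ 8 / R ^ 2 := by
  calc R * a ^ 2 / ((1 + r ^ 3) * b ^ 2) = R / (1 + r ^ 3) * (a ^ 2 / b ^ 2) := by
        rw [mul_div_mul_comm]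
    _ ≤ R / (R / 2) ^ 3 * 1 := by
        gcongr
        · linarith [pow_le_pow_left₀ (by positivity) hrR 3]
        · exact div_le_one_of_le₀ (by gcongr) (sq_nonneg b)
    _ = 8 / R ^ 2 := by field_simp; ring

theorem kernel_le_of_two_mul_lt {R a b r : ℝ} (hR : 1 ≤ R) (ha : 0 ≤ a) (har : a ≤ r + 2)
    (hrR : 2 * R < r) (hb : r - R ≤ b) : R * a ^ 2 / ((1 + r ^ 3) * b ^ 2) ≤ 16 * R / r ^ 3 := by
  have hr : 0 < r := by linarith
  calc R * a ^ 2 / ((1 + r ^ 3) * b ^ 2) ≤ R * (2 * r) ^ 2 / (r ^ 3 * (r / 2) ^ 2) := by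
        gcongr <;> linarith
    _ = 16 * R / r ^ 3 := by field_simp; ring

theorem kernel_le_kernelMajorant {R a b r : ℝ} (hR : 1 ≤ R) (ha : 0 ≤ a) (hab : a ≤ b)
    (har : a ≤ r + 2) (hr : 0 ≤ r) (hb : |r - R| ≤ b) :
    R * a ^ 2 / ((1 + r ^ 3) * b ^ 2) ≤ kernelMajorant R r := by
  have hR0 : 0 < R := by linarith
  have hnear : 0 ≤ nearMajorant R r :=
    indicator_apply_nonneg fun _ => div_nonneg (by norm_num) (mul_nonneg hR0.le (by linarith))
  have hmid : 0 ≤ middleMajorant R r := indicator_apply_nonneg fun _ => by positivity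
  have hfar : 0 ≤ farMajorant R r :=
    indicator_apply_nonneg fun h => div_nonneg (by positivity) (pow_nonneg (by linarith [h.out]) 3)
  rw [kernelMajorant, Pi.add_apply, Pi.add_apply]
  rcases le_or_gt r (R / 2) with hr₁ | hr₁
  · have := kernel_le_of_le_half hR0 ha hr har hr₁
      ((le_abs_self _).trans ((abs_sub_comm R r).trans_le hb))
    rw [nearMajorant, indicator_of_mem (mem_Iic.2 hr₁)]
    linarith
  rcases le_or_gt r (2 * R) with hr₂ | hr₂
  · have := kernel_le_of_half_le hR0 ha hab hr₁.le
    rw [middleMajorant, indicator_of_mem (mem_Iic.2 hr₂)]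
    linarith
  · have := kernel_le_of_two_mul_lt hR ha har hr₂ ((le_abs_self _).trans hb)
    rw [farMajorant, indicator_of_mem (mem_Ioi.2 hr₂)]
    linarith

theorem mul_indicator_eq_indicator_mul (s : Set ℝ) (f : ℝ → ℝ) :
    (fun r => r * s.indicator f r) = s.indicator fun r => r * f r :=
  funext fun _ => (indicator_mul_right s id f).symm

theorem integrableOn_Ioi_indicator_Iic {f : ℝ → ℝ} {a C : ℝ} (hf : Measurable f)
    (hC : ∀ r ∈ Ioc 0 a, |f r| ≤ C) : IntegrableOn ((Iic a).indicator f) (Ioi 0) := by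
  rw [integrableOn_indicator_iff measurableSet_Iic, Iic_inter_Ioi]
  exact Measure.integrableOn_of_bounded measure_Ioc_lt_top.ne hf.aestronglyMeasurable
    ((ae_restrict_iff' measurableSet_Ioc).2 (.of_forall hC))

theorem setIntegral_Ioi_indicator_Iic_le {f : ℝ → ℝ} {a C : ℝ} (ha : 0 ≤ a)
    (hC : ∀ r ∈ Ioc 0 a, |f r| ≤ C) : ∫ r in Ioi 0, (Iic a).indicator f r ≤ C * a := by
  rw [setIntegral_indicator measurableSet_Iic, Ioi_inter_Iic]
  calc ∫ r in Ioc 0 a, f r ≤ ‖∫ r in Ioc 0 a, f r‖ := Real.le_norm_self _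
    _ ≤ C * volume.real (Ioc 0 a) := norm_setIntegral_le_of_norm_le_const measure_Ioc_lt_top hC
    _ = C * a := by rw [Real.volume_real_Ioc_of_le ha, sub_zero]

theorem abs_mul_nearMajorant_le {R r : ℝ} (hR : 0 < R) (hr : r ∈ Ioc 0 (R / 2)) :
    |r * (56 / (R * (1 + r)))| ≤ 56 / R := by
  obtain ⟨hr0, -⟩ := hr
  rw [abs_of_pos (by positivity), mul_div_assoc', div_le_div_iff₀ (by positivity) hR]
  nlinarith

theorem integrableOn_mul_nearMajorant {R : ℝ} (hR : 0 < R) :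
    IntegrableOn (fun r => r * nearMajorant R r) (Ioi 0) := by
  rw [nearMajorant, mul_indicator_eq_indicator_mul]
  exact integrableOn_Ioi_indicator_Iic (by fun_prop) fun r hr => abs_mul_nearMajorant_le hR hr

theorem integral_mul_nearMajorant_le {R : ℝ} (hR : 0 < R) :
    ∫ r in Ioi 0, r * nearMajorant R r ≤ 28 := by
  rw [nearMajorant, mul_indicator_eq_indicator_mul]
  refine (setIntegral_Ioi_indicator_Iic_le (by positivity)
    fun r hr => abs_mul_nearMajorant_le hR hr).trans_eq ?_
  field_simp; norm_num

theorem abs_mul_middleMajorant_le {R r : ℝ} (hR : 0 < R) (hr : r ∈ Ioc 0 (2 * R)) :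
    |r * (8 / R ^ 2)| ≤ 16 / R := by
  obtain ⟨hr0, hrR⟩ := hr
  rw [abs_of_pos (by positivity), mul_div_assoc', div_le_div_iff₀ (by positivity) hR]
  nlinarith

theorem integrableOn_mul_middleMajorant {R : ℝ} (hR : 0 < R) :
    IntegrableOn (fun r => r * middleMajorant R r) (Ioi 0) := by
  rw [middleMajorant, mul_indicator_eq_indicator_mul]
  exact integrableOn_Ioi_indicator_Iic (by fun_prop) fun r hr => abs_mul_middleMajorant_le hR hr

theorem integral_mul_middleMajorant_le {R : ℝ} (hR : 0 < R) :
    ∫ r in Ioi 0, r * middleMajorant R r ≤ 32 := by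
  rw [middleMajorant, mul_indicator_eq_indicator_mul]
  refine (setIntegral_Ioi_indicator_Iic_le (by positivity)
    fun r hr => abs_mul_middleMajorant_le hR hr).trans_eq ?_
  field_simp; norm_num

theorem eqOn_mul_farMajorant {R : ℝ} (hR : 0 < R) :
    EqOn (fun r => r * (16 * R / r ^ 3)) (fun r => 16 * R * r ^ (-2 : ℝ)) (Ioi (2 * R)) := by
  intro r hr
  have hr0 : 0 < r := lt_trans (by positivity) hr
  simp only [Real.rpow_neg hr0.le, Real.rpow_two]
  field_simp

theorem integrableOn_mul_farMajorant {R : ℝ} (hR : 0 < R) :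
    IntegrableOn (fun r => r * farMajorant R r) (Ioi 0) := by
  rw [farMajorant, mul_indicator_eq_indicator_mul, integrableOn_indicator_iff measurableSet_Ioi,
    Ioi_inter_Ioi, max_eq_left (by positivity),
    integrableOn_congr_fun (eqOn_mul_farMajorant hR) measurableSet_Ioi]
  exact (integrableOn_Ioi_rpow_of_lt (by norm_num) (by positivity)).const_mul _

theorem integral_mul_farMajorant {R : ℝ} (hR : 0 < R) :
    ∫ r in Ioi 0, r * farMajorant R r = 8 := by
  rw [farMajorant, mul_indicator_eq_indicator_mul, setIntegral_indicator measurableSet_Ioi,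
    Ioi_inter_Ioi, max_eq_right (by positivity),
    setIntegral_congr_fun measurableSet_Ioi (eqOn_mul_farMajorant hR), integral_const_mul,
    integral_Ioi_rpow_of_lt (by norm_num) (by positivity), show (-2 : ℝ) + 1 = -1 by norm_num,
    Real.rpow_neg_one]
  field_simp
  norm_num

theorem integrable_kernelMajorant_comp_norm {R : ℝ} (hR : 0 < R) :
    Integrable fun z : ℂ => kernelMajorant R ‖z‖ := by
  rw [Complex.integrable_comp_norm_iff]
  simp only [smul_eq_mul, kernelMajorant, Pi.add_apply, mul_add]
  exact ((integrableOn_mul_nearMajorant hR).add (integrableOn_mul_middleMajorant hR)).add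
    (integrableOn_mul_farMajorant hR)

theorem integral_kernelMajorant_comp_norm_le {R : ℝ} (hR : 0 < R) :
    ∫ z : ℂ, kernelMajorant R ‖z‖ ≤ 136 * Real.pi := by
  rw [Complex.integral_comp_norm]
  simp only [smul_eq_mul, kernelMajorant, Pi.add_apply, mul_add]
  have hnear := integrableOn_mul_nearMajorant hR
  have hmid := integrableOn_mul_middleMajorant hR
  rw [integral_add (f := fun r => r * nearMajorant R r + r * middleMajorant R r) (hnear.add hmid)
    (integrableOn_mul_farMajorant hR), integral_add hnear hmid,
    integral_mul_farMajorant hR]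
  nlinarith [integral_mul_nearMajorant_le hR, integral_mul_middleMajorant_le hR, Real.pi_pos]

theorem integral_interpolation_kernel_le {w : ℂ} {d : ℂ → ℝ} (hw : 1 ≤ ‖w‖)
    (hd0 : ∀ z, 0 ≤ d z) (hdw : ∀ z, d z ≤ ‖z - w‖) (hd : ∀ z, d z ≤ ‖z‖ + 2) :
    ∫ z : ℂ, ‖w‖ * d z ^ 2 / ((1 + ‖z‖ ^ 3) * ‖z - w‖ ^ 2) ≤ 136 * Real.pi := by
  refine le_trans (integral_mono_of_nonneg (.of_forall fun z => by positivity)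
    (integrable_kernelMajorant_comp_norm (by linarith)) (.of_forall fun z => ?_))
    (integral_kernelMajorant_comp_norm_le (by linarith))
  exact kernel_le_kernelMajorant hw (hd0 z) (hdw z) (hd z) (norm_nonneg z)
    (abs_norm_sub_norm_le z w)

/-- The integral `∫_ℂ |λ| dist(z,Λ)² / ((1+|z|³)|z-λ|²) dm(z)` is bounded uniformly
over `λ ∈ Λ`, where `Λ = {λ_n}`, `|λ_n| = e^{(n+1)/2}`; consequently `‖E_λ‖²_φ ≤ C`. -/
theorem interpolation_functions_uniformly_bounded (θ : ℕ → ℝ)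
    (lam : ℕ → ℂ) (hlam : ∀ n, lam n = Complex.exp (((n + 1 : ℝ) / 2 : ℂ) + (θ n : ℂ) * Complex.I))
    (d : ℂ → ℝ) (hd : ∀ z, d z = ⨅ n : ℕ, ‖z - lam n‖) :
    ∃ C : ℝ, 0 < C ∧ ∀ n : ℕ,
      (∫ z : ℂ, ‖lam n‖ * d z ^ 2
          / ((1 + ‖z‖ ^ 3) * ‖z - lam n‖ ^ 2)) ≤ C := by
  have hnorm (n : ℕ) : ‖lam n‖ = Real.exp ((n + 1) / 2) := by
    rw [hlam, Complex.norm_exp]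
    simp
  have hd0 (z : ℂ) : 0 ≤ d z := hd z ▸ Real.iInf_nonneg fun _ => norm_nonneg _
  have hdle (z : ℂ) (n : ℕ) : d z ≤ ‖z - lam n‖ :=
    hd z ▸ ciInf_le ⟨0, by rintro _ ⟨m, rfl⟩; exact norm_nonneg _⟩ n
  have hlam0 : ‖lam 0‖ ≤ 2 := by
    rw [hnorm]
    convert Real.exp_bound_div_one_sub_of_interval (x := 1 / 2) (by norm_num) (by norm_num) using 1
    all_goals norm_num
  refine ⟨136 * Real.pi, by positivity, fun n => integral_interpolation_kernel_le ?_ hd0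
    (hdle · n) fun z => (hdle z 0).trans ?_⟩
  · rw [hnorm]
    exact Real.one_le_exp (by positivity)
  · linarith [norm_sub_le z (lam 0)]
end
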